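/- arXiv:2504.11978 — 3 statements merged into one kernel-verified Lean document; each statement's English description precedes it below -/
import Mathlib

section
/- Let A, X, Y be jointly distributed random variables on a probability space, each taking values in a finite nonempty set. Define the characteristic bipartite graph G(X, Y) to have as vertices the disjoint union of the states x of X with P(X = x) > 0 and the states y of Y with P(Y = y) > 0, with an edge between x and y if and only if P(X = x, Y = y) > 0. If G(X, Y) is connected (any two vertices are joined by a path), then I[A : X | Y] = 0 and I[A : Y | X] = 0 together imply I[A : (X, Y)] = 0 (the Gács–Körner criterion for the Intersection property). -/
open MeasureTheory ProbabilityTheory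

/-- Shannon entropy (natural logarithm) of a random variable with values in a
finite set, computed from its distribution under `μ`. -/
noncomputable def Hshannon {Ω : Type*} [MeasurableSpace Ω] (μ : Measure Ω)
    {S : Type*} [Fintype S] (X : Ω → S) : ℝ :=
  ∑ x : S, Real.negMulLog (μ (X ⁻¹' {x})).toReal

/-- Conditional entropy `H[X | Y] = H[X, Y] - H[Y]`. -/
noncomputable def condH {Ω : Type*} [MeasurableSpace Ω] (μ : Measure Ω)
    {S T : Type*} [Fintype S] [Fintype T] (X : Ω → S) (Y : Ω → T) : ℝ :=
  Hshannon μ (fun ω => (X ω, Y ω)) - Hshannon μ Y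

/-- Mutual information `I[X : Y] = H[X] + H[Y] - H[X, Y]`. -/
noncomputable def mutInfo {Ω : Type*} [MeasurableSpace Ω] (μ : Measure Ω)
    {S T : Type*} [Fintype S] [Fintype T] (X : Ω → S) (Y : Ω → T) : ℝ :=
  Hshannon μ X + Hshannon μ Y - Hshannon μ (fun ω => (X ω, Y ω))

/-- Conditional mutual information
`I[X : Y | Z] = H[X, Z] + H[Y, Z] - H[X, Y, Z] - H[Z]`. -/
noncomputable def cmi {Ω : Type*} [MeasurableSpace Ω] (μ : Measure Ω)
    {S T U : Type*} [Fintype S] [Fintype T] [Fintype U]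
    (X : Ω → S) (Y : Ω → T) (Z : Ω → U) : ℝ :=
  Hshannon μ (fun ω => (X ω, Z ω)) + Hshannon μ (fun ω => (Y ω, Z ω))
    - Hshannon μ (fun ω => (X ω, Y ω, Z ω)) - Hshannon μ Z


open Finset


lemma toReal_fiber_sum {Ω : Type*} [MeasurableSpace Ω] (μ : Measure Ω) [IsFiniteMeasure μ]
    {T : Type*} [Fintype T] [MeasurableSpace T] [MeasurableSingletonClass T]
    (f : Ω → T) (hf : Measurable f) (s : Set Ω) (hs : MeasurableSet s) :
    (μ s).toReal = ∑ t : T, (μ (s ∩ f ⁻¹' {t})).toReal := by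
  rw [← ENNReal.toReal_sum (fun t _ => measure_ne_top μ _)]
  congr 1
  have hu : s = ⋃ t : T, s ∩ f ⁻¹' {t} := by ext ω; simp
  rw [show μ s = μ (⋃ t : T, s ∩ f ⁻¹' {t}) from by rw [← hu]]
  rw [measure_iUnion ?_ (fun t => hs.inter (hf (measurableSet_singleton t))), tsum_fintype]
  intro t t' htt'
  simp only [Function.onFun, Set.disjoint_left]
  rintro ω ⟨-, h1⟩ ⟨-, h2⟩
  exact htt' (h1.symm.trans h2)

lemma gibbs_eq {ι : Type*} [Fintype ι] (a b : ι → ℝ)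
    (ha : ∀ i, 0 ≤ a i) (hb : ∀ i, 0 ≤ b i) (hab : ∀ i, b i = 0 → a i = 0)
    (hsum : ∑ i, a i = ∑ i, b i)
    (h : ∑ i, a i * Real.log (a i / b i) ≤ 0) : ∀ i, a i = b i := by
  set g : ι → ℝ := fun i => a i * Real.log (a i / b i) - (a i - b i) with hg
  have hpt : ∀ i, 0 ≤ g i ∧ (g i = 0 → a i = b i) := by
    intro i
    rcases eq_or_lt_of_le (ha i) with h0 | h0
    · constructor
      · simp [hg, ← h0, hb i]
      · intro hz
        simp [hg, ← h0] at hz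
        rw [← h0, hz]
    · have hbi : 0 < b i := by
        rcases eq_or_lt_of_le (hb i) with hb0 | hb0
        · exact absurd (hab i hb0.symm) (by linarith)
        · exact hb0
      have hle : Real.log (b i / a i) ≤ b i / a i - 1 := Real.log_le_sub_one_of_pos (by positivity)
      have hlog : Real.log (a i / b i) = - Real.log (b i / a i) := by
        rw [← Real.log_inv]
        congr 1
        field_simp
      have hba : a i * (b i / a i) = b i := by field_simp
      constructor
      · have := mul_le_mul_of_nonneg_left hle h0.le
        rw [mul_sub, hba, mul_one] at this
        simp only [hg, hlog]
        nlinarith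
      · intro hz
        by_contra hne
        have hne' : b i / a i ≠ 1 := by
          intro h1
          apply hne
          field_simp at h1
          linarith
        have hlt : Real.log (b i / a i) < b i / a i - 1 :=
          Real.log_lt_sub_one_of_pos (by positivity) hne'
        have := mul_lt_mul_of_pos_left hlt h0
        rw [mul_sub, hba, mul_one] at this
        simp only [hg, hlog] at hz
        nlinarith
  have hsg : ∑ i, g i = ∑ i, a i * Real.log (a i / b i) - (∑ i, a i - ∑ i, b i) := by
    simp [hg, Finset.sum_sub_distrib]
  have hsg0 : ∑ i, g i ≤ 0 := by rw [hsg, hsum]; simpa using h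
  have hz : ∀ i ∈ Finset.univ, g i = 0 := by
    rw [← Finset.sum_eq_zero_iff_of_nonneg (fun i _ => (hpt i).1)]
    exact le_antisymm hsg0 (Finset.sum_nonneg (fun i _ => (hpt i).1))
  exact fun i => (hpt i).2 (hz i (Finset.mem_univ i))

lemma negMulLog_sum {ι : Type*} [Fintype ι] (f : ι → ℝ) (s : ℝ) (h : ∑ i, f i = s) :
    Real.negMulLog s = ∑ i, -(f i * Real.log s) := by
  subst h
  rw [Real.negMulLog, neg_mul, Finset.sum_mul, ← Finset.sum_neg_distrib]

lemma sum_comm3 {α β γ M : Type*} [Fintype α] [Fintype β] [Fintype γ] [AddCommMonoid M]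
    (f : α → β → γ → M) :
    ∑ c : γ, ∑ b : β, ∑ a : α, f a b c = ∑ a : α, ∑ b : β, ∑ c : γ, f a b c := by
  calc ∑ c : γ, ∑ b : β, ∑ a : α, f a b c
      = ∑ c : γ, ∑ a : α, ∑ b : β, f a b c := Finset.sum_congr rfl fun c _ => Finset.sum_comm
    _ = ∑ a : α, ∑ c : γ, ∑ b : β, f a b c := Finset.sum_comm
    _ = ∑ a : α, ∑ b : β, ∑ c : γ, f a b c := Finset.sum_congr rfl fun a _ => Finset.sum_comm

noncomputable def Pr1 {Ω : Type*} [MeasurableSpace Ω] (μ : Measure Ω)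
    {S : Type*} (X : Ω → S) (x : S) : ℝ := (μ {ω | X ω = x}).toReal

noncomputable def Pr2 {Ω : Type*} [MeasurableSpace Ω] (μ : Measure Ω)
    {S T : Type*} (X : Ω → S) (Y : Ω → T) (x : S) (y : T) : ℝ :=
  (μ {ω | X ω = x ∧ Y ω = y}).toReal

noncomputable def Pr3 {Ω : Type*} [MeasurableSpace Ω] (μ : Measure Ω)
    {S T U : Type*} (X : Ω → S) (Y : Ω → T) (Z : Ω → U) (x : S) (y : T) (z : U) : ℝ :=
  (μ {ω | X ω = x ∧ Y ω = y ∧ Z ω = z}).toReal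

section CI

variable {Ω : Type*} [MeasurableSpace Ω] (μ : Measure Ω) [IsProbabilityMeasure μ]
    {SA SU SV : Type*}
    [Fintype SA] [MeasurableSpace SA] [MeasurableSingletonClass SA]
    [Fintype SU] [MeasurableSpace SU] [MeasurableSingletonClass SU]
    [Fintype SV] [MeasurableSpace SV] [MeasurableSingletonClass SV]
    (A : Ω → SA) (U : Ω → SU) (V : Ω → SV)

lemma Pr_nonneg (s : Set Ω) : (0:ℝ) ≤ (μ s).toReal := ENNReal.toReal_nonneg

lemma Pr2_split (hA : Measurable A) (hU : Measurable U) (hV : Measurable V)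
    (u : SU) (v : SV) : Pr2 μ U V u v = ∑ a : SA, Pr3 μ A U V a u v := by
  rw [Pr2, toReal_fiber_sum μ A hA _
    (show MeasurableSet {ω | U ω = u ∧ V ω = v} from
      (hU (measurableSet_singleton u)).inter (hV (measurableSet_singleton v)))]
  refine Finset.sum_congr rfl fun a _ => ?_
  rw [Pr3]
  congr 1
  apply congrArg
  ext ω
  simp only [Set.mem_inter_iff, Set.mem_setOf_eq, Set.mem_preimage, Set.mem_singleton_iff]
  tauto

lemma Pr1_split (hU : Measurable U) (hV : Measurable V) (v : SV) :
    Pr1 μ V v = ∑ u : SU, Pr2 μ U V u v := by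
  rw [Pr1, toReal_fiber_sum μ U hU _
    (show MeasurableSet {ω | V ω = v} from hV (measurableSet_singleton v))]
  refine Finset.sum_congr rfl fun u _ => ?_
  rw [Pr2]
  congr 1
  apply congrArg
  ext ω
  simp only [Set.mem_inter_iff, Set.mem_setOf_eq, Set.mem_preimage, Set.mem_singleton_iff]
  tauto

lemma Pr1_split_fst (hU : Measurable U) (hV : Measurable V) (u : SU) :
    Pr1 μ U u = ∑ v : SV, Pr2 μ U V u v := by
  rw [Pr1, toReal_fiber_sum μ V hV _
    (show MeasurableSet {ω | U ω = u} from hU (measurableSet_singleton u))]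
  refine Finset.sum_congr rfl fun v _ => ?_
  rw [Pr2]
  refine congrArg _ (congrArg _ ?_)
  ext ω
  simp only [Set.mem_inter_iff, Set.mem_setOf_eq, Set.mem_preimage, Set.mem_singleton_iff]

lemma Pr1_one (hA : Measurable A) : ∑ a : SA, Pr1 μ A a = 1 := by
  have h := toReal_fiber_sum μ A hA Set.univ MeasurableSet.univ
  simp only [measure_univ, ENNReal.toReal_one, Set.univ_inter] at h
  rw [← h.symm]
  rfl

end CI

set_option linter.unusedSectionVars false

section CI2

variable {Ω : Type*} [MeasurableSpace Ω] (μ : Measure Ω) [IsProbabilityMeasure μ]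
    {SA SU SV : Type*}
    [Fintype SA] [MeasurableSpace SA] [MeasurableSingletonClass SA]
    [Fintype SU] [MeasurableSpace SU] [MeasurableSingletonClass SU]
    [Fintype SV] [MeasurableSpace SV] [MeasurableSingletonClass SV]
    (A : Ω → SA) (U : Ω → SU) (V : Ω → SV)

lemma H_pair (hA : Measurable A) (hU : Measurable U) :
    Hshannon μ (fun ω => (A ω, U ω)) = ∑ a : SA, ∑ u : SU, Real.negMulLog (Pr2 μ A U a u) := by
  rw [Hshannon, Fintype.sum_prod_type]
  refine Finset.sum_congr rfl fun a _ => Finset.sum_congr rfl fun u _ => ?_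
  rw [Pr2]
  congr 2
  apply congrArg
  ext ω
  simp [Prod.ext_iff]

lemma H_triple (hA : Measurable A) (hU : Measurable U) (hV : Measurable V) :
    Hshannon μ (fun ω => (A ω, U ω, V ω)) =
      ∑ a : SA, ∑ u : SU, ∑ v : SV, Real.negMulLog (Pr3 μ A U V a u v) := by
  rw [Hshannon, Fintype.sum_prod_type]
  refine Finset.sum_congr rfl fun a _ => ?_
  rw [Fintype.sum_prod_type]
  refine Finset.sum_congr rfl fun u _ => Finset.sum_congr rfl fun v _ => ?_
  rw [Pr3]
  congr 2
  apply congrArg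
  ext ω
  simp [Prod.ext_iff]

lemma H_single : Hshannon μ A = ∑ a : SA, Real.negMulLog (Pr1 μ A a) := by
  rw [Hshannon]
  refine Finset.sum_congr rfl fun a _ => ?_
  rw [Pr1]
  congr 2

lemma Pr2_split_mid (hA : Measurable A) (hU : Measurable U) (hV : Measurable V)
    (a : SA) (v : SV) : Pr2 μ A V a v = ∑ u : SU, Pr3 μ A U V a u v := by
  rw [Pr2, toReal_fiber_sum μ U hU _
    (show MeasurableSet {ω | A ω = a ∧ V ω = v} from
      (hA (measurableSet_singleton a)).inter (hV (measurableSet_singleton v)))]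
  refine Finset.sum_congr rfl fun u _ => ?_
  rw [Pr3]
  congr 1
  apply congrArg
  ext ω
  simp only [Set.mem_inter_iff, Set.mem_setOf_eq, Set.mem_preimage, Set.mem_singleton_iff]
  tauto

lemma ci_of_cmi (hA : Measurable A) (hU : Measurable U) (hV : Measurable V)
    (h : cmi μ A U V = 0) :
    ∀ a u v, Pr3 μ A U V a u v = Pr2 μ A V a v * Pr2 μ U V u v / Pr1 μ V v := by
  have nn3 : ∀ a u v, 0 ≤ Pr3 μ A U V a u v := fun a u v => Pr_nonneg μ _
  have nnAV : ∀ a v, 0 ≤ Pr2 μ A V a v := fun a v => Pr_nonneg μ _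
  have nnUV : ∀ u v, 0 ≤ Pr2 μ U V u v := fun u v => Pr_nonneg μ _
  have nnV : ∀ v, 0 ≤ Pr1 μ V v := fun v => Pr_nonneg μ _
  have sAV : ∀ a v, Pr2 μ A V a v = ∑ u : SU, Pr3 μ A U V a u v :=
    Pr2_split_mid μ A U V hA hU hV
  have sUV : ∀ u v, Pr2 μ U V u v = ∑ a : SA, Pr3 μ A U V a u v := fun u v =>
    Pr2_split μ A U V hA hU hV u v
  have sV : ∀ v, Pr1 μ V v = ∑ u : SU, Pr2 μ U V u v := Pr1_split μ U V hU hV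
  have sV' : ∀ v, Pr1 μ V v = ∑ a : SA, Pr2 μ A V a v := Pr1_split μ A V hA hV
  have dAV : ∀ a u v, Pr3 μ A U V a u v ≤ Pr2 μ A V a v := fun a u v => by
    rw [sAV]; exact Finset.single_le_sum (fun u' _ => nn3 a u' v) (Finset.mem_univ u)
  have dUV : ∀ a u v, Pr3 μ A U V a u v ≤ Pr2 μ U V u v := fun a u v => by
    rw [sUV]; exact Finset.single_le_sum (fun a' _ => nn3 a' u v) (Finset.mem_univ a)
  have dV : ∀ u v, Pr2 μ U V u v ≤ Pr1 μ V v := fun u v => by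
    rw [sV]; exact Finset.single_le_sum (fun u' _ => nnUV u' v) (Finset.mem_univ u)
  have dV' : ∀ a v, Pr2 μ A V a v ≤ Pr1 μ V v := fun a v => by
    rw [sV']; exact Finset.single_le_sum (fun a' _ => nnAV a' v) (Finset.mem_univ a)
  -- rewrite the four entropies as triple sums in order (a, u, v)
  have T1 : Hshannon μ (fun ω => (A ω, V ω)) =
      ∑ a, ∑ u, ∑ v, -(Pr3 μ A U V a u v * Real.log (Pr2 μ A V a v)) := by
    rw [H_pair μ A V hA hV]
    refine (Finset.sum_congr rfl fun a _ => ?_).trans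
      (Finset.sum_congr rfl fun a _ => Finset.sum_comm)
    exact Finset.sum_congr rfl fun v _ =>
      negMulLog_sum (fun u => Pr3 μ A U V a u v) _ (sAV a v).symm
  have T2 : Hshannon μ (fun ω => (U ω, V ω)) =
      ∑ a, ∑ u, ∑ v, -(Pr3 μ A U V a u v * Real.log (Pr2 μ U V u v)) := by
    rw [H_pair μ U V hU hV]
    have e : ∀ u, ∑ v, Real.negMulLog (Pr2 μ U V u v) =
        ∑ a, ∑ v, -(Pr3 μ A U V a u v * Real.log (Pr2 μ U V u v)) := by
      intro u
      rw [Finset.sum_comm]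
      exact Finset.sum_congr rfl fun v _ =>
        negMulLog_sum (fun a => Pr3 μ A U V a u v) _ (sUV u v).symm
    rw [Finset.sum_congr rfl fun u _ => e u, Finset.sum_comm]
  have T3 : Hshannon μ (fun ω => (A ω, U ω, V ω)) =
      ∑ a, ∑ u, ∑ v, Real.negMulLog (Pr3 μ A U V a u v) := H_triple μ A U V hA hU hV
  have T4 : Hshannon μ V = ∑ a, ∑ u, ∑ v, -(Pr3 μ A U V a u v * Real.log (Pr1 μ V v)) := by
    rw [H_single μ V]
    calc ∑ v, Real.negMulLog (Pr1 μ V v)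
        = ∑ v, ∑ u, ∑ a, -(Pr3 μ A U V a u v * Real.log (Pr1 μ V v)) := by
          refine Finset.sum_congr rfl fun v _ => ?_
          rw [negMulLog_sum (fun u => Pr2 μ U V u v) _ (sV v).symm]
          refine Finset.sum_congr rfl fun u _ => ?_
          rw [sUV, Finset.sum_mul, ← Finset.sum_neg_distrib]
      _ = ∑ a, ∑ u, ∑ v, -(Pr3 μ A U V a u v * Real.log (Pr1 μ V v)) :=
          sum_comm3 _
  have hform : cmi μ A U V = ∑ a, ∑ u, ∑ v, Pr3 μ A U V a u v *
      Real.log (Pr3 μ A U V a u v / (Pr2 μ A V a v * Pr2 μ U V u v / Pr1 μ V v)) := by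
    rw [cmi, T1, T2, T3, T4]
    simp only [← Finset.sum_add_distrib, ← Finset.sum_sub_distrib]
    refine Finset.sum_congr rfl fun a _ => Finset.sum_congr rfl fun u _ =>
      Finset.sum_congr rfl fun v _ => ?_
    rcases eq_or_lt_of_le (nn3 a u v) with h0 | h0
    · simp [Real.negMulLog, ← h0]
    · have h1 : 0 < Pr2 μ A V a v := lt_of_lt_of_le h0 (dAV a u v)
      have h2 : 0 < Pr2 μ U V u v := lt_of_lt_of_le h0 (dUV a u v)
      have h3 : 0 < Pr1 μ V v := lt_of_lt_of_le h2 (dV u v)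
      rw [Real.negMulLog, Real.log_div (ne_of_gt h0) (by positivity),
        Real.log_div (by positivity) (ne_of_gt h3),
        Real.log_mul (ne_of_gt h1) (ne_of_gt h2)]
      ring
  -- apply Gibbs over the product type
  have hsum : (∑ i : SA × SU × SV, Pr3 μ A U V i.1 i.2.1 i.2.2) =
      ∑ i : SA × SU × SV, Pr2 μ A V i.1 i.2.2 * Pr2 μ U V i.2.1 i.2.2 / Pr1 μ V i.2.2 := by
    simp only [Fintype.sum_prod_type]
    rw [← sum_comm3 (fun a u v => Pr3 μ A U V a u v),
        ← sum_comm3 (fun a u v => Pr2 μ A V a v * Pr2 μ U V u v / Pr1 μ V v)]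
    refine Finset.sum_congr rfl fun v _ => ?_
    have L : ∑ u : SU, ∑ a : SA, Pr3 μ A U V a u v = Pr1 μ V v := by
      rw [sV]
      exact Finset.sum_congr rfl fun u _ => (sUV u v).symm
    have R : ∑ u : SU, ∑ a : SA, Pr2 μ A V a v * Pr2 μ U V u v / Pr1 μ V v
        = Pr1 μ V v := by
      have e1 : ∀ u : SU, ∑ a : SA, Pr2 μ A V a v * Pr2 μ U V u v / Pr1 μ V v
          = Pr1 μ V v * Pr2 μ U V u v / Pr1 μ V v := by
        intro u
        rw [← Finset.sum_div, ← Finset.sum_mul, ← sV']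
      rw [Finset.sum_congr rfl fun u _ => e1 u]
      rcases eq_or_lt_of_le (nnV v) with h0 | h0
      · simp [← h0]
      · rw [Finset.sum_congr rfl fun u _ =>
          mul_div_cancel_left₀ (Pr2 μ U V u v) (ne_of_gt h0), ← sV]
    rw [L, R]
  have hle : (∑ i : SA × SU × SV, Pr3 μ A U V i.1 i.2.1 i.2.2 *
      Real.log (Pr3 μ A U V i.1 i.2.1 i.2.2 /
        (Pr2 μ A V i.1 i.2.2 * Pr2 μ U V i.2.1 i.2.2 / Pr1 μ V i.2.2))) ≤ 0 := by
    apply le_of_eq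
    rw [← h, hform]
    simp only [Fintype.sum_prod_type]
  have hG := gibbs_eq (fun i : SA × SU × SV => Pr3 μ A U V i.1 i.2.1 i.2.2)
    (fun i => Pr2 μ A V i.1 i.2.2 * Pr2 μ U V i.2.1 i.2.2 / Pr1 μ V i.2.2)
    (fun i => nn3 _ _ _)
    (fun i => by
      have := nnAV i.1 i.2.2
      have := nnUV i.2.1 i.2.2
      have := nnV i.2.2
      positivity)
    (fun i hb0 => by
      by_contra hP
      have h0 : 0 < Pr3 μ A U V i.1 i.2.1 i.2.2 := lt_of_le_of_ne (nn3 _ _ _) (Ne.symm hP)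
      have h1 : 0 < Pr2 μ A V i.1 i.2.2 := lt_of_lt_of_le h0 (dAV _ _ _)
      have h2 : 0 < Pr2 μ U V i.2.1 i.2.2 := lt_of_lt_of_le h0 (dUV _ _ _)
      have h3 : 0 < Pr1 μ V i.2.2 := lt_of_lt_of_le h2 (dV _ _)
      have : 0 < Pr2 μ A V i.1 i.2.2 * Pr2 μ U V i.2.1 i.2.2 / Pr1 μ V i.2.2 := by positivity
      linarith)
    hsum hle
  exact fun a u v => hG (a, u, v)

end CI2


/-- A vertex of the characteristic bipartite graph of `(X, Y)`: a state of `X` or of `Y`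
with positive probability. -/
def posVertex {Ω : Type*} [MeasurableSpace Ω] (μ : Measure Ω)
    {SX SY : Type*} (X : Ω → SX) (Y : Ω → SY) : SX ⊕ SY → Prop
  | Sum.inl x => 0 < μ (X ⁻¹' {x})
  | Sum.inr y => 0 < μ (Y ⁻¹' {y})

/-- Adjacency in the characteristic bipartite graph of `(X, Y)`: a state `x` of `X` and a
state `y` of `Y` are adjacent iff `P(X = x, Y = y) > 0`. -/
def adjCBG {Ω : Type*} [MeasurableSpace Ω] (μ : Measure Ω)
    {SX SY : Type*} (X : Ω → SX) (Y : Ω → SY) : SX ⊕ SY → SX ⊕ SY → Prop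
  | Sum.inl x, Sum.inr y => 0 < μ {ω | X ω = x ∧ Y ω = y}
  | Sum.inr y, Sum.inl x => 0 < μ {ω | X ω = x ∧ Y ω = y}
  | _, _ => False

/-- **Gács–Körner criterion for Intersection.** If the characteristic bipartite graph of
`(X, Y)` is connected, then `I[A : X | Y] = 0` and `I[A : Y | X] = 0` imply
`I[A : (X, Y)] = 0`. -/
theorem gacs_koerner_criterion
    {Ω : Type*} [MeasurableSpace Ω] (μ : Measure Ω) [IsProbabilityMeasure μ]
    {SA SX SY : Type*}
    [Fintype SA] [Nonempty SA] [MeasurableSpace SA] [MeasurableSingletonClass SA]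
    [Fintype SX] [Nonempty SX] [MeasurableSpace SX] [MeasurableSingletonClass SX]
    [Fintype SY] [Nonempty SY] [MeasurableSpace SY] [MeasurableSingletonClass SY]
    (A : Ω → SA) (X : Ω → SX) (Y : Ω → SY)
    (hA : Measurable A) (hX : Measurable X) (hY : Measurable Y)
    (hconn : ∀ u v : SX ⊕ SY, posVertex μ X Y u → posVertex μ X Y v →
      Relation.ReflTransGen (adjCBG μ X Y) u v)
    (h1 : cmi μ A X Y = 0) (h2 : cmi μ A Y X = 0) :
    mutInfo μ A (fun ω => (X ω, Y ω)) = 0 := by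
  classical
  have CI1 := ci_of_cmi μ A X Y hA hX hY h1
  have CI2 := ci_of_cmi μ A Y X hA hY hX h2
  -- reorder lemmas
  have e3 : ∀ a x y, Pr3 μ A Y X a y x = Pr3 μ A X Y a x y := by
    intro a x y
    rw [Pr3, Pr3]
    refine congrArg _ (congrArg _ ?_)
    ext ω
    simp only [Set.mem_setOf_eq]
    tauto
  have e2 : ∀ x y, Pr2 μ Y X y x = Pr2 μ X Y x y := by
    intro x y
    rw [Pr2, Pr2]
    refine congrArg _ (congrArg _ ?_)
    ext ω
    simp only [Set.mem_setOf_eq]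
    tauto
  have nn2 : ∀ (x : SX) (y : SY), 0 ≤ Pr2 μ X Y x y := fun x y => Pr_nonneg μ _
  have sXfst : ∀ x, Pr1 μ X x = ∑ y : SY, Pr2 μ X Y x y := Pr1_split_fst μ X Y hX hY
  have sYsnd : ∀ y, Pr1 μ Y y = ∑ x : SX, Pr2 μ X Y x y := Pr1_split μ X Y hX hY
  have sXA : ∀ x, Pr1 μ X x = ∑ a : SA, Pr2 μ A X a x := Pr1_split μ A X hA hX
  have sAfst : ∀ a, Pr1 μ A a = ∑ x : SX, Pr2 μ A X a x := Pr1_split_fst μ A X hA hX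
  have sXY3 : ∀ x y, Pr2 μ X Y x y = ∑ a : SA, Pr3 μ A X Y a x y :=
    Pr2_split μ A X Y hA hX hY
  -- positivity transfers
  have hPr2pos : ∀ (x : SX) (y : SY), 0 < μ {ω | X ω = x ∧ Y ω = y} ↔ 0 < Pr2 μ X Y x y := by
    intro x y
    rw [Pr2, ENNReal.toReal_pos_iff]
    exact ⟨fun h => ⟨h, measure_lt_top μ _⟩, fun h => h.1⟩
  have pvX : ∀ x : SX, 0 < Pr1 μ X x → posVertex μ X Y (Sum.inl x) := by
    intro x hx
    show 0 < μ (X ⁻¹' {x})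
    exact (ENNReal.toReal_pos_iff.mp hx).1
  have pvY : ∀ y : SY, 0 < Pr1 μ Y y → posVertex μ X Y (Sum.inr y) := by
    intro y hy
    show 0 < μ (Y ⁻¹' {y})
    exact (ENNReal.toReal_pos_iff.mp hy).1
  -- the conditional distribution function on vertices
  set f : SA → SX ⊕ SY → ℝ := fun a => Sum.elim
    (fun x => Pr2 μ A X a x / Pr1 μ X x) (fun y => Pr2 μ A Y a y / Pr1 μ Y y) with hf
  have key : ∀ (x : SX) (y : SY), 0 < μ {ω | X ω = x ∧ Y ω = y} →
      ∀ a, Pr2 μ A X a x / Pr1 μ X x = Pr2 μ A Y a y / Pr1 μ Y y := by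
    intro x y hxy a
    have hxy' : 0 < Pr2 μ X Y x y := (hPr2pos x y).mp hxy
    have hx : 0 < Pr1 μ X x := lt_of_lt_of_le hxy' (by
      rw [sXfst]
      exact Finset.single_le_sum (fun y' _ => nn2 x y') (Finset.mem_univ y))
    have hy : 0 < Pr1 μ Y y := lt_of_lt_of_le hxy' (by
      rw [sYsnd]
      exact Finset.single_le_sum (fun x' _ => nn2 x' y) (Finset.mem_univ x))
    have E1 := CI1 a x y
    have E2 := CI2 a y x
    rw [e3 a x y, e2 x y] at E2
    have h5 : (Pr2 μ A X a x / Pr1 μ X x) * Pr2 μ X Y x y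
        = (Pr2 μ A Y a y / Pr1 μ Y y) * Pr2 μ X Y x y := by
      have l1 : (Pr2 μ A X a x / Pr1 μ X x) * Pr2 μ X Y x y
          = Pr2 μ A X a x * Pr2 μ X Y x y / Pr1 μ X x := by ring
      have l2 : (Pr2 μ A Y a y / Pr1 μ Y y) * Pr2 μ X Y x y
          = Pr2 μ A Y a y * Pr2 μ X Y x y / Pr1 μ Y y := by ring
      rw [l1, l2, ← E1, ← E2]
    exact mul_right_cancel₀ (ne_of_gt hxy') h5
  have hedge : ∀ u v, adjCBG μ X Y u v → ∀ a, f a u = f a v := by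
    intro u v huv
    match u, v with
    | Sum.inl x, Sum.inl x' => exact absurd huv id
    | Sum.inl x, Sum.inr y => exact fun a => key x y huv a
    | Sum.inr y, Sum.inl x => exact fun a => (key x y huv a).symm
    | Sum.inr y, Sum.inr y' => exact absurd huv id
  have hpath : ∀ {u v}, Relation.ReflTransGen (adjCBG μ X Y) u v → ∀ a, f a u = f a v := by
    intro u v h
    induction h with
    | refl => exact fun a => rfl
    | tail _ hstep ih => exact fun a => (ih a).trans (hedge _ _ hstep a)
  -- base point
  obtain ⟨x0, hx0⟩ : ∃ x : SX, 0 < Pr1 μ X x := by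
    by_contra hc
    push_neg at hc
    have hle : ∑ x : SX, Pr1 μ X x ≤ 0 := Finset.sum_nonpos (fun x _ => hc x)
    rw [Pr1_one μ X hX] at hle
    linarith
  have hconst : ∀ a u, posVertex μ X Y u → f a u = f a (Sum.inl x0) := fun a u hu =>
    hpath (hconn u (Sum.inl x0) hu (pvX x0 hx0)) a
  -- P(A = a) equals the common conditional value
  have pAeq : ∀ a, Pr1 μ A a = f a (Sum.inl x0) := by
    intro a
    have hx' : ∀ x : SX, Pr2 μ A X a x = f a (Sum.inl x0) * Pr1 μ X x := by
      intro x
      have h0le : (0:ℝ) ≤ Pr1 μ X x := Pr_nonneg μ _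
      rcases eq_or_lt_of_le h0le with h0 | h0
      · have hz : Pr2 μ A X a x = 0 := by
          have hs := sXA x
          rw [← h0] at hs
          have := (Finset.sum_eq_zero_iff_of_nonneg
            (fun a' _ => Pr_nonneg μ _ : ∀ a' ∈ Finset.univ, (0:ℝ) ≤ Pr2 μ A X a' x)).mp
            hs.symm
          exact this a (Finset.mem_univ a)
        rw [hz, ← h0, mul_zero]
      · have hcx := hconst a (Sum.inl x) (pvX x h0)
        have : Pr2 μ A X a x / Pr1 μ X x = f a (Sum.inl x0) := hcx
        exact (div_eq_iff (ne_of_gt h0)).mp this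
    rw [sAfst a, Finset.sum_congr rfl fun x _ => hx' x, ← Finset.mul_sum,
      Pr1_one μ X hX, mul_one]
  -- factorization of the joint distribution
  have hfac : ∀ a x y, Pr3 μ A X Y a x y = Pr1 μ A a * Pr2 μ X Y x y := by
    intro a x y
    rcases eq_or_lt_of_le (nn2 x y) with h0 | h0
    · have hz : Pr3 μ A X Y a x y = 0 := by
        have hs := sXY3 x y
        rw [← h0] at hs
        have := (Finset.sum_eq_zero_iff_of_nonneg
          (fun a' _ => Pr_nonneg μ _ : ∀ a' ∈ Finset.univ, (0:ℝ) ≤ Pr3 μ A X Y a' x y)).mp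
          hs.symm
        exact this a (Finset.mem_univ a)
      rw [hz, ← h0, mul_zero]
    · have hy : 0 < Pr1 μ Y y := lt_of_lt_of_le h0 (by
        rw [sYsnd]
        exact Finset.single_le_sum (fun x' _ => nn2 x' y) (Finset.mem_univ x))
      have hyv : posVertex μ X Y (Sum.inr y) := pvY y hy
      have hcy : Pr2 μ A Y a y / Pr1 μ Y y = Pr1 μ A a :=
        (hconst a (Sum.inr y) hyv).trans (pAeq a).symm
      rw [CI1 a x y]
      calc Pr2 μ A Y a y * Pr2 μ X Y x y / Pr1 μ Y y
          = (Pr2 μ A Y a y / Pr1 μ Y y) * Pr2 μ X Y x y := by ring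
        _ = Pr1 μ A a * Pr2 μ X Y x y := by rw [hcy]
  -- final entropy computation
  have hXY1 : ∑ x : SX, ∑ y : SY, Pr2 μ X Y x y = 1 := by
    rw [Finset.sum_congr rfl fun x _ => (sXfst x).symm, Pr1_one μ X hX]
  have hA1 : ∑ a : SA, Pr1 μ A a = 1 := Pr1_one μ A hA
  have HAZ : Hshannon μ (fun ω => (A ω, X ω, Y ω)) =
      ∑ a : SA, ∑ x : SX, ∑ y : SY, Real.negMulLog (Pr3 μ A X Y a x y) :=
    H_triple μ A X Y hA hX hY
  have key3 : ∑ a : SA, ∑ x : SX, ∑ y : SY, Real.negMulLog (Pr3 μ A X Y a x y)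
      = (∑ a : SA, Real.negMulLog (Pr1 μ A a))
        + (∑ x : SX, ∑ y : SY, Real.negMulLog (Pr2 μ X Y x y)) := by
    have e : ∀ (a : SA) (x : SX) (y : SY), Real.negMulLog (Pr3 μ A X Y a x y)
        = Pr2 μ X Y x y * Real.negMulLog (Pr1 μ A a)
          + Pr1 μ A a * Real.negMulLog (Pr2 μ X Y x y) := by
      intro a x y
      rw [hfac a x y, Real.negMulLog_mul]
    simp only [e]
    have per : ∀ a : SA, ∑ x : SX, ∑ y : SY, (Pr2 μ X Y x y * Real.negMulLog (Pr1 μ A a)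
        + Pr1 μ A a * Real.negMulLog (Pr2 μ X Y x y))
        = Real.negMulLog (Pr1 μ A a)
          + Pr1 μ A a * ∑ x : SX, ∑ y : SY, Real.negMulLog (Pr2 μ X Y x y) := by
      intro a
      simp only [Finset.sum_add_distrib, ← Finset.sum_mul, ← Finset.mul_sum]
      rw [hXY1, one_mul]
    rw [Finset.sum_congr rfl fun a _ => per a, Finset.sum_add_distrib,
      ← Finset.sum_mul, hA1, one_mul]
  have hmdef : mutInfo μ A (fun ω => (X ω, Y ω)) =
      Hshannon μ A + Hshannon μ (fun ω => (X ω, Y ω))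
        - Hshannon μ (fun ω => (A ω, X ω, Y ω)) := rfl
  rw [hmdef, HAZ, key3, H_single μ A, H_pair μ X Y hX hY]
  ring
end

section
/- Let A, X, Y be jointly distributed random variables on a probability space, taking values in finite nonempty sets Q_A, Q_X, Q_Y respectively. Suppose that for every x ∈ Q_X and y ∈ Q_Y there is at most one value a ∈ Q_A such that P(A = a, X = x) > 0 and P(A = a, Y = y) > 0. Then H[A | X] + H[A | Y] ≤ H[A], and consequently I[A : X] = 0 and I[A : Y] = 0 together imply I[A : (X, Y)] = 0. -/
open MeasureTheory ProbabilityTheory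

/-!
Conditioned on `A = a`, the variable `X` lives on the set `Sₓ(a)` of those `x` with
`P(A = a, X = x) > 0`, so the log-sum inequality gives
`H[A|X] ≤ ∑ₐ p(a) log (P(X ∈ Sₓ(a)) / p(a))`, and likewise for `Y`. The hypothesis says that the
rectangles `Sₓ(a) × S_Y(a)` are pairwise disjoint, hence
`∑ₐ P(X ∈ Sₓ(a)) P(Y ∈ S_Y(a)) ≤ 1`, and a second log-sum inequality bounds the sum of the two
estimates by `H[A]`. If moreover `I[A:X] = I[A:Y] = 0`, then `H[A|X] = H[A|Y] = H[A]`, which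
forces `H[A] = 0`, and `0 ≤ I[A:(X,Y)] ≤ H[A]`.
-/

open Real Finset

theorem mul_log_sub_log_le_sub {p q : ℝ} (hp : 0 ≤ p) (hq : 0 ≤ q) (hpq : 0 < p → 0 < q) :
    p * (log q - log p) ≤ q - p := by
  rcases hp.eq_or_lt with rfl | hp
  · simpa using hq
  have hq := hpq hp
  calc p * (log q - log p) = p * log (q / p) := by rw [log_div hq.ne' hp.ne']
    _ ≤ p * (q / p - 1) := by gcongr; exact log_le_sub_one_of_pos (div_pos hq hp)
    _ = q - p := by field_simp

-- The log-sum inequality.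
theorem sum_mul_log_sub_log_le {ι : Type*} (s : Finset ι) {p q : ι → ℝ}
    (hp : ∀ i ∈ s, 0 ≤ p i) (hq : ∀ i ∈ s, 0 ≤ q i) (hpq : ∀ i ∈ s, 0 < p i → 0 < q i) :
    ∑ i ∈ s, p i * (log (q i) - log (p i))
      ≤ (∑ i ∈ s, p i) * (log (∑ i ∈ s, q i) - log (∑ i ∈ s, p i)) := by
  set P := ∑ i ∈ s, p i
  set Q := ∑ i ∈ s, q i
  rcases (sum_nonneg hp).eq_or_lt with hP | hP
  · have hp0 : ∀ i ∈ s, p i = 0 := (sum_eq_zero_iff_of_nonneg hp).mp hP.symm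
    rw [sum_eq_zero fun i hi => by rw [hp0 i hi, zero_mul], show P = 0 from hP.symm, zero_mul]
  obtain ⟨j, hj, hpj⟩ := exists_lt_of_sum_lt (f := 0) (s := s) (g := p) (by simpa using hP)
  have hQ : 0 < Q := (hpq j hj hpj).trans_le (single_le_sum hq hj)
  -- Gibbs' inequality applied to `q` rescaled to total mass `P`
  have hc : 0 < P / Q := div_pos hP hQ
  have key : ∑ i ∈ s, p i * (log (P / Q * q i) - log (p i)) ≤ 0 := calc
    _ ≤ ∑ i ∈ s, (P / Q * q i - p i) := sum_le_sum fun i hi =>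
          mul_log_sub_log_le_sub (hp i hi) (mul_nonneg hc.le (hq i hi))
            fun h => mul_pos hc (hpq i hi h)
    _ = 0 := by rw [sum_sub_distrib, ← mul_sum, div_mul_cancel₀ _ hQ.ne', sub_self]
  have split : ∀ i ∈ s, p i * (log (P / Q * q i) - log (p i))
      = p i * (log (q i) - log (p i)) - p i * (log Q - log P) := by
    intro i hi
    rcases (hp i hi).eq_or_lt with h | h
    · simp [← h]
    · rw [log_mul hc.ne' (hpq i hi h).ne', log_div hP.ne' hQ.ne']; ring
  rw [sum_congr rfl split, sum_sub_distrib, ← sum_mul] at key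
  linarith

section Probability

variable {Ω : Type*} [MeasurableSpace Ω] {μ : Measure Ω} {S T : Type*} {V : Ω → S} {W : Ω → T}

noncomputable def prob (μ : Measure Ω) (V : Ω → S) (v : S) : ℝ := μ.real (V ⁻¹' {v})

theorem prob_nonneg (μ : Measure Ω) (V : Ω → S) (v : S) : 0 ≤ prob μ V v := measureReal_nonneg

theorem prob_pair_pos_iff [IsFiniteMeasure μ] (v : S) (w : T) :
    0 < prob μ (fun ω => (V ω, W ω)) (v, w) ↔ 0 < μ {ω | V ω = v ∧ W ω = w} := by
  simp only [prob, Set.preimage, Set.mem_singleton_iff, Prod.mk.injEq, measureReal_def,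
    ENNReal.toReal_pos_iff, measure_lt_top, and_true]

theorem prob_pair_le_right [IsFiniteMeasure μ] (v : S) (w : T) :
    prob μ (fun ω => (V ω, W ω)) (v, w) ≤ prob μ W w :=
  measureReal_mono fun _ h => congrArg Prod.snd h

theorem Hshannon_eq_sum_negMulLog_prob [Fintype S] :
    Hshannon μ V = ∑ v, negMulLog (prob μ V v) := rfl

theorem sum_prob [IsProbabilityMeasure μ] [Fintype S] [MeasurableSpace S]
    [MeasurableSingletonClass S] (hV : Measurable V) : ∑ v, prob μ V v = 1 := by
  simp only [prob]
  rw [sum_measureReal_preimage_singleton _ fun v _ => hV (measurableSet_singleton v)]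
  simp

variable [MeasurableSpace S] [MeasurableSingletonClass S]
  [MeasurableSpace T] [MeasurableSingletonClass T]

theorem sum_prob_pair_right [IsFiniteMeasure μ] [Fintype T] (hV : Measurable V)
    (hW : Measurable W) (v : S) :
    ∑ w, prob μ (fun ω => (V ω, W ω)) (v, w) = prob μ V v := calc
  _ = ∑ p ∈ {v} ×ˢ univ, μ.real ((fun ω => (V ω, W ω)) ⁻¹' {p}) := by
        rw [singleton_product, sum_map]; rfl
  _ = μ.real ((fun ω => (V ω, W ω)) ⁻¹' ↑({v} ×ˢ (univ : Finset T))) :=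
        sum_measureReal_preimage_singleton _ fun p _ => (hV.prodMk hW) (measurableSet_singleton p)
  _ = prob μ V v := by rw [prob]; congr 1; ext ω; simp [eq_comm]

theorem sum_prob_pair_left [IsFiniteMeasure μ] [Fintype S] (hV : Measurable V)
    (hW : Measurable W) (w : T) :
    ∑ v, prob μ (fun ω => (V ω, W ω)) (v, w) = prob μ W w := calc
  _ = ∑ p ∈ univ ×ˢ {w}, μ.real ((fun ω => (V ω, W ω)) ⁻¹' {p}) := by
        rw [product_singleton, sum_map]; rfl
  _ = μ.real ((fun ω => (V ω, W ω)) ⁻¹' ↑((univ : Finset S) ×ˢ {w})) :=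
        sum_measureReal_preimage_singleton _ fun p _ => (hV.prodMk hW) (measurableSet_singleton p)
  _ = prob μ W w := by rw [prob]; congr 1; ext ω; simp [eq_comm]

noncomputable def condSupport [Fintype T] (μ : Measure Ω) (V : Ω → S) (W : Ω → T) (v : S) :
    Finset T :=
  univ.filter fun w => 0 < prob μ (fun ω => (V ω, W ω)) (v, w)

theorem prob_le_sum_prob_condSupport [IsFiniteMeasure μ] [Fintype T] (hV : Measurable V)
    (hW : Measurable W) (v : S) : prob μ V v ≤ ∑ w ∈ condSupport μ V W v, prob μ W w := by
  rw [← sum_prob_pair_right hV hW v, condSupport, sum_filter]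
  refine sum_le_sum fun w _ => ?_
  split_ifs with h
  · exact prob_pair_le_right v w
  · exact not_lt.mp h

end Probability

theorem mutInfo_eq_Hshannon_sub_condH {Ω S T : Type*} [MeasurableSpace Ω] (μ : Measure Ω)
    [Fintype S] [Fintype T] (V : Ω → S) (W : Ω → T) :
    mutInfo μ V W = Hshannon μ V - condH μ V W := by
  rw [mutInfo, condH]
  ring

section Entropy

variable {Ω : Type*} [MeasurableSpace Ω] {μ : Measure Ω}
  {S T : Type*} [Fintype S] [MeasurableSpace S] [MeasurableSingletonClass S]
  [Fintype T] [MeasurableSpace T] [MeasurableSingletonClass T] {V : Ω → S} {W : Ω → T}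

theorem condH_eq_sum [IsFiniteMeasure μ] (hV : Measurable V) (hW : Measurable W) :
    condH μ V W = ∑ v, ∑ w, prob μ (fun ω => (V ω, W ω)) (v, w) *
      (log (prob μ W w) - log (prob μ (fun ω => (V ω, W ω)) (v, w))) := by
  have hHW : Hshannon μ W
      = ∑ v, ∑ w, -(prob μ (fun ω => (V ω, W ω)) (v, w) * log (prob μ W w)) := by
    rw [Hshannon_eq_sum_negMulLog_prob, sum_comm]
    refine sum_congr rfl fun w _ => ?_
    rw [sum_neg_distrib, ← sum_mul, sum_prob_pair_left hV hW, negMulLog, neg_mul]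
  rw [condH, Hshannon_eq_sum_negMulLog_prob, Fintype.sum_prod_type, hHW, ← sum_sub_distrib]
  refine sum_congr rfl fun v _ => ?_
  rw [← sum_sub_distrib]
  refine sum_congr rfl fun w _ => ?_
  rw [negMulLog]
  ring

theorem condH_nonneg [IsFiniteMeasure μ] (hV : Measurable V) (hW : Measurable W) :
    0 ≤ condH μ V W := by
  rw [condH_eq_sum hV hW]
  refine sum_nonneg fun v _ => sum_nonneg fun w _ => ?_
  rcases (prob_nonneg μ (fun ω => (V ω, W ω)) (v, w)).eq_or_lt with h | h
  · rw [← h, zero_mul]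
  · exact mul_nonneg h.le (sub_nonneg.mpr (log_le_log h (prob_pair_le_right v w)))

-- The log-sum inequality in each fiber `V = v`, against `P(W = w)` restricted to `condSupport`.
theorem condH_le_sum_mul_log_sum_prob_condSupport [IsFiniteMeasure μ] (hV : Measurable V)
    (hW : Measurable W) :
    condH μ V W ≤ ∑ v, prob μ V v *
      (log (∑ w ∈ condSupport μ V W v, prob μ W w) - log (prob μ V v)) := by
  rw [condH_eq_sum hV hW]
  refine sum_le_sum fun v _ => ?_
  set p := fun w => prob μ (fun ω => (V ω, W ω)) (v, w)
  set q := fun w => if 0 < p w then prob μ W w else 0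
  have hpq : ∀ w, p w * (log (prob μ W w) - log (p w)) = p w * (log (q w) - log (p w)) := by
    intro w
    by_cases h : 0 < p w
    · simp only [q, if_pos h]
    · simp [le_antisymm (not_lt.mp h) (prob_nonneg _ _ _)]
  calc ∑ w, p w * (log (prob μ W w) - log (p w))
      = ∑ w, p w * (log (q w) - log (p w)) := sum_congr rfl fun w _ => hpq w
    _ ≤ (∑ w, p w) * (log (∑ w, q w) - log (∑ w, p w)) :=
        sum_mul_log_sub_log_le univ (fun w _ => prob_nonneg _ _ _)
          (fun w _ => by dsimp only [q]; split_ifs <;> simp [prob_nonneg])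
          (fun w _ h => by simpa only [q, if_pos h] using h.trans_le (prob_pair_le_right v w))
    _ = _ := by rw [← sum_filter, sum_prob_pair_right hV hW]; rfl

theorem condH_le_Hshannon [IsProbabilityMeasure μ] (hV : Measurable V) (hW : Measurable W) :
    condH μ V W ≤ Hshannon μ V := by
  rw [Hshannon_eq_sum_negMulLog_prob]
  refine (condH_le_sum_mul_log_sum_prob_condSupport hV hW).trans (sum_le_sum fun v _ => ?_)
  have hlog : log (∑ w ∈ condSupport μ V W v, prob μ W w) ≤ 0 :=
    log_nonpos (sum_nonneg fun w _ => prob_nonneg μ W w)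
      ((sum_le_univ_sum_of_nonneg fun w => prob_nonneg μ W w).trans (sum_prob hW).le)
  rw [negMulLog]
  linarith [mul_nonpos_of_nonneg_of_nonpos (prob_nonneg μ V v) hlog]

theorem mutInfo_nonneg [IsProbabilityMeasure μ] (hV : Measurable V) (hW : Measurable W) :
    0 ≤ mutInfo μ V W := by
  rw [mutInfo_eq_Hshannon_sub_condH]
  linarith [condH_le_Hshannon (μ := μ) hV hW]

theorem mutInfo_le_Hshannon [IsFiniteMeasure μ] (hV : Measurable V) (hW : Measurable W) :
    mutInfo μ V W ≤ Hshannon μ V := by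
  rw [mutInfo_eq_Hshannon_sub_condH]
  linarith [condH_nonneg (μ := μ) hV hW]

end Entropy

theorem sum_mul_sum_le_of_pairwiseDisjoint {ι α β R : Type*} [Fintype α] [Fintype β]
    [CommSemiring R] [PartialOrder R] [IsOrderedRing R] (u : Finset ι) (s : ι → Finset α)
    (t : ι → Finset β) {f : α → R} {g : β → R} (hf : ∀ a, 0 ≤ f a) (hg : ∀ b, 0 ≤ g b)
    (h : (u : Set ι).PairwiseDisjoint fun i => s i ×ˢ t i) :
    ∑ i ∈ u, (∑ a ∈ s i, f a) * (∑ b ∈ t i, g b) ≤ (∑ a, f a) * (∑ b, g b) := by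
  classical
  simp_rw [sum_mul_sum, ← sum_product']
  rw [← sum_biUnion h]
  exact sum_le_univ_sum_of_nonneg fun p => mul_nonneg (hf _) (hg _)

theorem pairwiseDisjoint_condSupport_prod {Ω SA SX SY : Type*} [MeasurableSpace Ω]
    {μ : Measure Ω} [IsFiniteMeasure μ] [Fintype SX] [Fintype SY]
    {A : Ω → SA} {X : Ω → SX} {Y : Ω → SY}
    (hsupp : ∀ (x : SX) (y : SY) (a a' : SA),
      0 < μ {ω | A ω = a ∧ X ω = x} → 0 < μ {ω | A ω = a ∧ Y ω = y} →
      0 < μ {ω | A ω = a' ∧ X ω = x} → 0 < μ {ω | A ω = a' ∧ Y ω = y} → a = a') :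
    (Set.univ : Set SA).PairwiseDisjoint fun a => condSupport μ A X a ×ˢ condSupport μ A Y a := by
  intro a _ a' _ hne
  refine disjoint_left.mpr fun ⟨x, y⟩ h h' => hne ?_
  simp only [mem_product, condSupport, mem_filter, mem_univ, true_and, prob_pair_pos_iff] at h h'
  exact hsupp x y a a' h.1 h.2 h'.1 h'.2

section Support

variable {Ω : Type*} [MeasurableSpace Ω] {μ : Measure Ω} [IsProbabilityMeasure μ]
  {SA SX SY : Type*}
  [Fintype SA] [MeasurableSpace SA] [MeasurableSingletonClass SA]
  [Fintype SX] [MeasurableSpace SX] [MeasurableSingletonClass SX]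
  [Fintype SY] [MeasurableSpace SY] [MeasurableSingletonClass SY]
  {A : Ω → SA} {X : Ω → SX} {Y : Ω → SY}

theorem condH_add_condH_le_Hshannon (hA : Measurable A) (hX : Measurable X) (hY : Measurable Y)
    (hdisj : (Set.univ : Set SA).PairwiseDisjoint
      fun a => condSupport μ A X a ×ˢ condSupport μ A Y a) :
    condH μ A X + condH μ A Y ≤ Hshannon μ A := by
  set PX := fun a => ∑ x ∈ condSupport μ A X a, prob μ X x
  set PY := fun a => ∑ y ∈ condSupport μ A Y a, prob μ Y y
  have hPX : ∀ a, prob μ A a ≤ PX a := prob_le_sum_prob_condSupport hA hX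
  have hPY : ∀ a, prob μ A a ≤ PY a := prob_le_sum_prob_condSupport hA hY
  have hPXY : ∀ a, 0 ≤ PX a * PY a := fun a =>
    mul_nonneg ((prob_nonneg μ A a).trans (hPX a)) ((prob_nonneg μ A a).trans (hPY a))
  have hsum : ∑ a, PX a * PY a ≤ 1 := calc
    _ ≤ (∑ x, prob μ X x) * (∑ y, prob μ Y y) :=
        sum_mul_sum_le_of_pairwiseDisjoint univ _ _ (prob_nonneg μ X)
          (prob_nonneg μ Y) (by rwa [coe_univ])
    _ = 1 := by rw [sum_prob hX, sum_prob hY, one_mul]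
  have hlogsum := sum_mul_log_sub_log_le univ (p := prob μ A) (q := fun a => PX a * PY a)
    (fun a _ => prob_nonneg μ A a) (fun a _ => hPXY a)
    (fun a _ h => mul_pos (h.trans_le (hPX a)) (h.trans_le (hPY a)))
  rw [sum_prob hA, log_one, sub_zero, one_mul] at hlogsum
  have hsplit : ∀ a, prob μ A a * (log (PX a) - log (prob μ A a))
      + prob μ A a * (log (PY a) - log (prob μ A a))
      = prob μ A a * (log (PX a * PY a) - log (prob μ A a)) + negMulLog (prob μ A a) := by
    intro a
    rcases (prob_nonneg μ A a).eq_or_lt with h | h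
    · simp [← h]
    · rw [log_mul (h.trans_le (hPX a)).ne' (h.trans_le (hPY a)).ne', negMulLog]
      ring
  calc condH μ A X + condH μ A Y
      ≤ ∑ a, prob μ A a * (log (PX a) - log (prob μ A a))
        + ∑ a, prob μ A a * (log (PY a) - log (prob μ A a)) :=
        add_le_add (condH_le_sum_mul_log_sum_prob_condSupport hA hX)
          (condH_le_sum_mul_log_sum_prob_condSupport hA hY)
    _ = ∑ a, prob μ A a * (log (PX a * PY a) - log (prob μ A a)) + Hshannon μ A := by
        rw [← sum_add_distrib, sum_congr rfl fun a _ => hsplit a, sum_add_distrib,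
          Hshannon_eq_sum_negMulLog_prob]
    _ ≤ Hshannon μ A := by
        linarith [log_nonpos (sum_nonneg fun a _ => hPXY a) hsum]

end Support

theorem krv_support_criterion_general
    {Ω : Type*} [MeasurableSpace Ω] (μ : Measure Ω) [IsProbabilityMeasure μ]
    {SA SX SY : Type*}
    [Fintype SA] [MeasurableSpace SA] [MeasurableSingletonClass SA]
    [Fintype SX] [MeasurableSpace SX] [MeasurableSingletonClass SX]
    [Fintype SY] [MeasurableSpace SY] [MeasurableSingletonClass SY]
    (A : Ω → SA) (X : Ω → SX) (Y : Ω → SY)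
    (hA : Measurable A) (hX : Measurable X) (hY : Measurable Y)
    (hsupp : ∀ (x : SX) (y : SY) (a a' : SA),
      0 < μ {ω | A ω = a ∧ X ω = x} → 0 < μ {ω | A ω = a ∧ Y ω = y} →
      0 < μ {ω | A ω = a' ∧ X ω = x} → 0 < μ {ω | A ω = a' ∧ Y ω = y} → a = a') :
    condH μ A X + condH μ A Y ≤ Hshannon μ A ∧
    (mutInfo μ A X = 0 → mutInfo μ A Y = 0 →
      mutInfo μ A (fun ω => (X ω, Y ω)) = 0) := by
  have hcondH := condH_add_condH_le_Hshannon hA hX hY (pairwiseDisjoint_condSupport_prod hsupp)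
  refine ⟨hcondH, fun hIX hIY => ?_⟩
  have hHA : Hshannon μ A ≤ 0 := by
    rw [mutInfo_eq_Hshannon_sub_condH] at hIX hIY
    linarith
  have hXY := hX.prodMk hY
  exact le_antisymm ((mutInfo_le_Hshannon hA hXY).trans hHA) (mutInfo_nonneg hA hXY)

/-- **Kaced–Romashchenko–Vereshchagin support criterion.** If for all states `x` of `X` and
`y` of `Y` there is at most one state `a` of `A` with `P(A = a, X = x) > 0` and
`P(A = a, Y = y) > 0`, then `H[A|X] + H[A|Y] ≤ H[A]`, and consequently `I[A:X] = 0` and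
`I[A:Y] = 0` imply `I[A:(X,Y)] = 0`. -/
theorem krv_support_criterion
    {Ω : Type*} [MeasurableSpace Ω] (μ : Measure Ω) [IsProbabilityMeasure μ]
    {SA SX SY : Type*}
    [Fintype SA] [Nonempty SA] [MeasurableSpace SA] [MeasurableSingletonClass SA]
    [Fintype SX] [Nonempty SX] [MeasurableSpace SX] [MeasurableSingletonClass SX]
    [Fintype SY] [Nonempty SY] [MeasurableSpace SY] [MeasurableSingletonClass SY]
    (A : Ω → SA) (X : Ω → SX) (Y : Ω → SY)
    (hA : Measurable A) (hX : Measurable X) (hY : Measurable Y)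
    (hsupp : ∀ (x : SX) (y : SY) (a a' : SA),
      0 < μ {ω | A ω = a ∧ X ω = x} → 0 < μ {ω | A ω = a ∧ Y ω = y} →
      0 < μ {ω | A ω = a' ∧ X ω = x} → 0 < μ {ω | A ω = a' ∧ Y ω = y} → a = a') :
    condH μ A X + condH μ A Y ≤ Hshannon μ A ∧
    (mutInfo μ A X = 0 → mutInfo μ A Y = 0 →
      mutInfo μ A (fun ω => (X ω, Y ω)) = 0) :=
  krv_support_criterion_general μ A X Y hA hX hY hsupp
end

section
/- Let A, X, Y, G be jointly distributed random variables on a probability space, each taking values in a finite nonempty set. If I[A : G | (X, Y)] = 0 and I[X : Y | A] = 0, then I[A : X | G] = 0 and I[A : Y | G] = 0 together imply I[A : (X, Y) | G] = 0 (dual conditional Ingleton criterion for Composition, case (i)). -/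
open MeasureTheory ProbabilityTheory

open Finset


open Finset

lemma atom_le {a b : ℝ} (ha : 0 ≤ a) (hb : 0 ≤ b) (h : 0 < a → 0 < b) :
    a - b ≤ a * Real.log a - a * Real.log b := by
  rcases eq_or_lt_of_le ha with h0 | ha'
  · simp [← h0, hb]
  · have hb' := h ha'
    have hlog := Real.log_le_sub_one_of_pos (x := b / a) (by positivity)
    rw [Real.log_div hb'.ne' ha'.ne'] at hlog
    have h2 : a * (Real.log b - Real.log a) ≤ a * (b / a - 1) :=
      mul_le_mul_of_nonneg_left hlog ha
    have hba : a * (b / a - 1) = b - a := by field_simp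
    nlinarith [h2]

lemma atom_eq {a b : ℝ} (ha : 0 ≤ a) (hb : 0 ≤ b) (h : 0 < a → 0 < b)
    (heq : a * Real.log a - a * Real.log b = a - b) : a = b := by
  rcases eq_or_lt_of_le ha with h0 | ha'
  · rw [← h0] at heq ⊢; simp at heq; linarith
  · have hb' := h ha'
    by_contra hne
    have hne' : b / a ≠ 1 := by
      intro hc
      exact hne ((div_eq_one_iff_eq ha'.ne').mp hc).symm
    have hlog := Real.log_lt_sub_one_of_pos (x := b / a) (by positivity) hne'
    rw [Real.log_div hb'.ne' ha'.ne'] at hlog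
    have h2 : a * (Real.log b - Real.log a) < a * (b / a - 1) :=
      (mul_lt_mul_iff_right₀ ha').mpr hlog
    have hba : a * (b / a - 1) = b - a := by field_simp
    nlinarith [h2]

lemma neg_sum_mul {ι : Type*} (s : Finset ι) (f : ι → ℝ) (c : ℝ) :
    -((∑ i ∈ s, f i) * c) = ∑ i ∈ s, -(f i * c) := by
  simp only [Finset.sum_neg_distrib, ← Finset.sum_mul]

section Flemma

variable {S T U : Type*} [Fintype S] [Fintype T] [Fintype U]

lemma F_eq_zero_iff (p : S → T → U → ℝ) (hp : ∀ s t u, 0 ≤ p s t u) :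
    ((∑ s, ∑ u, Real.negMulLog (∑ t, p s t u))
      + (∑ t, ∑ u, Real.negMulLog (∑ s, p s t u))
      - (∑ s, ∑ t, ∑ u, Real.negMulLog (p s t u))
      - (∑ u, Real.negMulLog (∑ s, ∑ t, p s t u)) = 0)
    ↔ ∀ s t u, p s t u * (∑ s', ∑ t', p s' t' u)
        = (∑ t', p s t' u) * (∑ s', p s' t u) := by
  classical
  set p13 : S → U → ℝ := fun s u => ∑ t, p s t u with hp13def
  set p23 : T → U → ℝ := fun t u => ∑ s, p s t u with hp23def
  set p3 : U → ℝ := fun u => ∑ s, ∑ t, p s t u with hp3def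
  have h13nn : ∀ s u, 0 ≤ p13 s u := fun s u => sum_nonneg fun t _ => hp s t u
  have h23nn : ∀ t u, 0 ≤ p23 t u := fun t u => sum_nonneg fun s _ => hp s t u
  have h3nn : ∀ u, 0 ≤ p3 u := fun u => sum_nonneg fun s _ => h13nn s u
  have hle13 : ∀ s t u, p s t u ≤ p13 s u := fun s t u =>
    single_le_sum (fun t' _ => hp s t' u) (mem_univ t)
  have hle23 : ∀ s t u, p s t u ≤ p23 t u := fun s t u =>
    single_le_sum (fun s' _ => hp s' t u) (mem_univ s)
  have hle3 : ∀ s u, p13 s u ≤ p3 u := fun s u =>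
    single_le_sum (fun s' _ => h13nn s' u) (mem_univ s)
  have h3sum13 : ∀ u, ∑ s, p13 s u = p3 u := fun u => rfl
  have h3sum23 : ∀ u, ∑ t, p23 t u = p3 u := fun u => Finset.sum_comm
  set ψ : S → T → U → ℝ := fun s t u =>
    (p s t u * Real.log (p s t u) + p s t u * Real.log (p3 u)
      - p s t u * Real.log (p13 s u) - p s t u * Real.log (p23 t u))
      - p s t u + p13 s u * p23 t u / p3 u with hψdef
  -- Step 1 : F = ∑ ψ
  have hF : ((∑ s, ∑ u, Real.negMulLog (p13 s u))
      + (∑ t, ∑ u, Real.negMulLog (p23 t u))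
      - (∑ s, ∑ t, ∑ u, Real.negMulLog (p s t u))
      - (∑ u, Real.negMulLog (p3 u)))
      = ∑ s, ∑ t, ∑ u, ψ s t u := by
    have e13 : (∑ s, ∑ u, Real.negMulLog (p13 s u))
        = ∑ s, ∑ t, ∑ u, -(p s t u * Real.log (p13 s u)) :=
      sum_congr rfl fun s _ =>
        (sum_congr rfl fun u _ => by
          rw [Real.negMulLog, neg_mul]
          exact neg_sum_mul univ (fun t => p s t u) _).trans Finset.sum_comm
    have e23 : (∑ t, ∑ u, Real.negMulLog (p23 t u))
        = ∑ s, ∑ t, ∑ u, -(p s t u * Real.log (p23 t u)) :=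
      ((sum_congr rfl fun t _ =>
        (sum_congr rfl fun u _ => by
          rw [Real.negMulLog, neg_mul]
          exact neg_sum_mul univ (fun s => p s t u) _).trans
            Finset.sum_comm)).trans Finset.sum_comm
    have e3 : (∑ u, Real.negMulLog (p3 u))
        = ∑ s, ∑ t, ∑ u, -(p s t u * Real.log (p3 u)) := by
      have e3' : (∑ u, Real.negMulLog (p3 u))
          = ∑ u, ∑ s, ∑ t, -(p s t u * Real.log (p3 u)) :=
        sum_congr rfl fun u _ => by
          rw [Real.negMulLog, neg_mul, neg_sum_mul univ (fun s => p13 s u) _]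
          exact sum_congr rfl fun s _ => neg_sum_mul univ (fun t => p s t u) _
      rw [e3', Finset.sum_comm]
      exact sum_congr rfl fun s _ => Finset.sum_comm
    have etrip : (∑ s, ∑ t, ∑ u, Real.negMulLog (p s t u))
        = ∑ s, ∑ t, ∑ u, -(p s t u * Real.log (p s t u)) := by
      simp [Real.negMulLog, neg_mul]
    -- the correction term sums to zero
    have hcorr : ∑ s, ∑ t, ∑ u, (p13 s u * p23 t u / p3 u - p s t u) = 0 := by
      have swap : ∑ s, ∑ t, ∑ u, (p13 s u * p23 t u / p3 u - p s t u)
          = ∑ u, ∑ s, ∑ t, (p13 s u * p23 t u / p3 u - p s t u) := by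
        calc ∑ s, ∑ t, ∑ u, (p13 s u * p23 t u / p3 u - p s t u)
            = ∑ s, ∑ u, ∑ t, (p13 s u * p23 t u / p3 u - p s t u) :=
              sum_congr rfl fun s _ => Finset.sum_comm
          _ = ∑ u, ∑ s, ∑ t, (p13 s u * p23 t u / p3 u - p s t u) := Finset.sum_comm
      rw [swap]
      refine Finset.sum_eq_zero fun u _ => ?_
      simp only [Finset.sum_sub_distrib]
      have hb : ∑ s, ∑ t, p13 s u * p23 t u / p3 u = p3 u * (p3 u / p3 u) := by
        simp only [mul_div_assoc, ← Finset.mul_sum, ← Finset.sum_div]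
        rw [h3sum23, ← Finset.sum_mul, h3sum13]
      rw [hb, show (∑ s, ∑ t, p s t u) = p3 u from rfl]
      rcases eq_or_lt_of_le (h3nn u) with h0 | hpos
      · rw [← h0]; simp
      · rw [div_self hpos.ne']; ring
    have expand : ∑ s, ∑ t, ∑ u, ψ s t u
        = (∑ s, ∑ t, ∑ u, -(p s t u * Real.log (p13 s u)))
          + (∑ s, ∑ t, ∑ u, -(p s t u * Real.log (p23 t u)))
          - (∑ s, ∑ t, ∑ u, -(p s t u * Real.log (p s t u)))
          - (∑ s, ∑ t, ∑ u, -(p s t u * Real.log (p3 u)))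
          + (∑ s, ∑ t, ∑ u, (p13 s u * p23 t u / p3 u - p s t u)) := by
      simp only [← Finset.sum_add_distrib, ← Finset.sum_sub_distrib]
      exact sum_congr rfl fun s _ => sum_congr rfl fun t _ => sum_congr rfl fun u _ => by
        simp only [hψdef]; ring
    rw [e13, e23, e3, etrip, expand, hcorr, add_zero]
  -- Step 2 : per-term characterization
  have key : ∀ s t u, (ψ s t u = 0 ↔ p s t u * p3 u = p13 s u * p23 t u) := by
    intro s t u
    rcases eq_or_lt_of_le (h3nn u) with h30 | h3pos
    · have h130 : p13 s u = 0 := le_antisymm (h30 ▸ hle3 s u) (h13nn s u)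
      have hp0 : p s t u = 0 := le_antisymm (h130 ▸ hle13 s t u) (hp s t u)
      constructor
      · intro _; rw [hp0, h130]; ring
      · intro _; simp [hψdef, hp0, h130]
    · rcases eq_or_lt_of_le (hp s t u) with hp0 | hppos
      · have hψsimp : ψ s t u = p13 s u * p23 t u / p3 u := by
          simp [hψdef, ← hp0]
        constructor
        · intro hz
          rw [hψsimp] at hz
          rcases (div_eq_zero_iff.mp hz) with h | h
          · rw [← hp0, h]; ring
          · exact absurd h h3pos.ne'
        · intro hfact
          rw [← hp0, zero_mul] at hfact
          rw [hψsimp, ← hfact, zero_div]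
      · have h13pos := lt_of_lt_of_le hppos (hle13 s t u)
        have h23pos := lt_of_lt_of_le hppos (hle23 s t u)
        have hbpos : 0 < p13 s u * p23 t u / p3 u := div_pos (mul_pos h13pos h23pos) h3pos
        have hlogb : Real.log (p13 s u * p23 t u / p3 u)
            = Real.log (p13 s u) + Real.log (p23 t u) - Real.log (p3 u) := by
          rw [Real.log_div (mul_pos h13pos h23pos).ne' h3pos.ne', Real.log_mul h13pos.ne' h23pos.ne']
        constructor
        · intro hz
          have hexp : p s t u * Real.log (p s t u)
              - p s t u * Real.log (p13 s u * p23 t u / p3 u)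
              = p s t u - p13 s u * p23 t u / p3 u := by
            rw [hlogb]; simp only [hψdef] at hz; ring_nf; ring_nf at hz; linarith
          have := atom_eq hppos.le hbpos.le (fun _ => hbpos) hexp
          rw [this]; field_simp
        · intro hfact
          have hbp : p13 s u * p23 t u / p3 u = p s t u := by
            rw [← hfact]; field_simp
          have hlogfact : Real.log (p s t u) + Real.log (p3 u)
              = Real.log (p13 s u) + Real.log (p23 t u) := by
            rw [← Real.log_mul hppos.ne' h3pos.ne', ← Real.log_mul h13pos.ne' h23pos.ne', hfact]
          simp only [hψdef]
          rw [hbp]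
          nlinarith [hlogfact]
  constructor
  · intro hFzero
    rw [hF] at hFzero
    have hψnn : ∀ s t u, 0 ≤ ψ s t u := by
      intro s t u
      rcases eq_or_lt_of_le (h3nn u) with h30 | h3pos
      · have h130 : p13 s u = 0 := le_antisymm (h30 ▸ hle3 s u) (h13nn s u)
        have hp0 : p s t u = 0 := le_antisymm (h130 ▸ hle13 s t u) (hp s t u)
        simp [hψdef, hp0, h130]
      · rcases eq_or_lt_of_le (hp s t u) with hp0 | hppos
        · have hψsimp : ψ s t u = p13 s u * p23 t u / p3 u := by
            simp [hψdef, ← hp0]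
          rw [hψsimp]; exact div_nonneg (mul_nonneg (h13nn s u) (h23nn t u)) (h3nn u)
        · have h13pos := lt_of_lt_of_le hppos (hle13 s t u)
          have h23pos := lt_of_lt_of_le hppos (hle23 s t u)
          have hbpos : 0 < p13 s u * p23 t u / p3 u := div_pos (mul_pos h13pos h23pos) h3pos
          have hlogb : Real.log (p13 s u * p23 t u / p3 u)
              = Real.log (p13 s u) + Real.log (p23 t u) - Real.log (p3 u) := by
            rw [Real.log_div (mul_pos h13pos h23pos).ne' h3pos.ne', Real.log_mul h13pos.ne' h23pos.ne']
          have hatom := atom_le hppos.le hbpos.le (fun _ => hbpos)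
          simp only [hψdef]
          nlinarith [hatom, hlogb]
    have hz1 : ∀ s, ∑ t, ∑ u, ψ s t u = 0 := by
      have := (Finset.sum_eq_zero_iff_of_nonneg
        (fun s _ => sum_nonneg fun t _ => sum_nonneg fun u _ => hψnn s t u)).mp hFzero
      exact fun s => this s (mem_univ s)
    have hz2 : ∀ s t, ∑ u, ψ s t u = 0 := by
      intro s t
      have := (Finset.sum_eq_zero_iff_of_nonneg
        (fun t _ => sum_nonneg fun u _ => hψnn s t u)).mp (hz1 s)
      exact this t (mem_univ t)
    have hz3 : ∀ s t u, ψ s t u = 0 := by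
      intro s t u
      have := (Finset.sum_eq_zero_iff_of_nonneg (fun u _ => hψnn s t u)).mp (hz2 s t)
      exact this u (mem_univ u)
    exact fun s t u => (key s t u).mp (hz3 s t u)
  · intro hfact
    rw [hF]
    exact Finset.sum_eq_zero fun s _ => Finset.sum_eq_zero fun t _ =>
      Finset.sum_eq_zero fun u _ => (key s t u).mpr (hfact s t u)

end Flemma

lemma exists_pos_of_sum_pos {ι : Type*} [Fintype ι] {f : ι → ℝ} (h : 0 < ∑ i, f i) :
    ∃ i, 0 < f i := by
  by_contra hc
  push_neg at hc
  exact absurd (Finset.sum_nonpos fun i _ => hc i) (not_le.mpr h)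

section Core

variable {A X Y : Type*} [Fintype A] [Fintype X] [Fintype Y]

lemma core_lemma (u : A → X → ℝ) (v : A → Y → ℝ) (w : X → Y → ℝ) (c : A → ℝ)
    (hu : ∀ a x, 0 ≤ u a x) (hv : ∀ a y, 0 ≤ v a y)
    (hw : ∀ x y, 0 ≤ w x y) (hc : ∀ a, 0 ≤ c a)
    (hcsum : ∑ a, c a = 1)
    (hrow : ∀ a x, ∑ y, w x y * (u a x * v a y / (∑ a', u a' x * v a' y))
        = c a * ∑ y, w x y)
    (hcol : ∀ a y, ∑ x, w x y * (u a x * v a y / (∑ a', u a' x * v a' y))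
        = c a * ∑ x, w x y) :
    ∀ a x y, 0 < w x y → u a x * v a y / (∑ a', u a' x * v a' y) = c a := by
  classical
  set P : X → Y → ℝ := fun x y => ∑ a', u a' x * v a' y with hPdef
  set π : A → X → Y → ℝ := fun a x y => u a x * v a y / P x y with hπdef
  have hPnn : ∀ x y, 0 ≤ P x y := fun x y => sum_nonneg fun a _ => mul_nonneg (hu a x) (hv a y)
  have hπnn : ∀ a x y, 0 ≤ π a x y := fun a x y =>
    div_nonneg (mul_nonneg (hu a x) (hv a y)) (hPnn x y)
  -- Step A : if c a = 0 then π vanishes on the support of w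
  have hzero : ∀ a x y, c a = 0 → 0 < w x y → π a x y = 0 := by
    intro a x y hca hwxy
    have hsum0 : ∑ y', w x y' * π a x y' = 0 := by rw [hrow a x, hca, zero_mul]
    have := (Finset.sum_eq_zero_iff_of_nonneg
      (fun y' _ => mul_nonneg (hw x y') (hπnn a x y'))).mp hsum0 y (mem_univ y)
    rcases mul_eq_zero.mp this with h | h
    · exact absurd h hwxy.ne'
    · exact h
  -- positivity of u on relevant rows
  have hupos : ∀ a x, 0 < c a → 0 < ∑ y, w x y → 0 < u a x := by
    intro a x hca hR
    have hpos : 0 < ∑ y, w x y * π a x y := by rw [hrow a x]; exact mul_pos hca hR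
    obtain ⟨y₀, hy₀⟩ := exists_pos_of_sum_pos hpos
    have hπpos : 0 < π a x y₀ := by
      rcases mul_pos_iff.mp hy₀ with ⟨_, h⟩ | ⟨h, _⟩
      · exact h
      · exact absurd h (not_lt.mpr (hw x y₀))
    by_contra hcon
    have hu0 : u a x = 0 := le_antisymm (not_lt.mp hcon) (hu a x)
    rw [hπdef] at hπpos
    simp only [hu0, zero_mul, zero_div] at hπpos
    exact lt_irrefl _ hπpos
  have hvpos : ∀ a y, 0 < c a → 0 < ∑ x, w x y → 0 < v a y := by
    intro a y hca hC
    have hpos : 0 < ∑ x, w x y * π a x y := by rw [hcol a y]; exact mul_pos hca hC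
    obtain ⟨x₀, hx₀⟩ := exists_pos_of_sum_pos hpos
    have hπpos : 0 < π a x₀ y := by
      rcases mul_pos_iff.mp hx₀ with ⟨_, h⟩ | ⟨h, _⟩
      · exact h
      · exact absurd h (not_lt.mpr (hw x₀ y))
    by_contra hcon
    have hv0 : v a y = 0 := le_antisymm (not_lt.mp hcon) (hv a y)
    rw [hπdef] at hπpos
    simp only [hv0, mul_zero, zero_div] at hπpos
    exact lt_irrefl _ hπpos
  have hRpos : ∀ x y, 0 < w x y → 0 < ∑ y', w x y' := fun x y hwxy =>
    lt_of_lt_of_le hwxy (single_le_sum (fun y' _ => hw x y') (mem_univ y))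
  have hCpos : ∀ x y, 0 < w x y → 0 < ∑ x', w x' y := fun x y hwxy =>
    lt_of_lt_of_le hwxy (single_le_sum (fun x' _ => hw x' y) (mem_univ x))
  -- positivity of P on the support of w
  obtain ⟨a₀, ha₀⟩ : ∃ a, 0 < c a := exists_pos_of_sum_pos (by rw [hcsum]; norm_num)
  have hPpos : ∀ x y, 0 < w x y → 0 < P x y := by
    intro x y hwxy
    have h1 := hupos a₀ x ha₀ (hRpos x y hwxy)
    have h2 := hvpos a₀ y ha₀ (hCpos x y hwxy)
    exact lt_of_lt_of_le (mul_pos h1 h2)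
      (single_le_sum (fun a _ => mul_nonneg (hu a x) (hv a y)) (mem_univ a₀))
  -- the positive-weight index set
  set Ap : Finset A := univ.filter (fun a => 0 < c a) with hApdef
  have hAmem : ∀ a, a ∈ Ap ↔ 0 < c a := by intro a; simp [hApdef]
  have hcAp : ∑ a ∈ Ap, c a = 1 := by
    rw [← hcsum]
    exact Finset.sum_subset (subset_univ _) fun a _ ha =>
      le_antisymm (not_lt.mp fun h => ha ((hAmem a).mpr h)) (hc a)
  -- restated row/col conditions in terms of π
  have hrow' : ∀ a x, ∑ y, w x y * π a x y = c a * ∑ y, w x y := by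
    intro a x
    simp only [hπdef, hPdef]
    exact hrow a x
  have hcol' : ∀ a y, ∑ x, w x y * π a x y = c a * ∑ x, w x y := by
    intro a y
    simp only [hπdef, hPdef]
    exact hcol a y
  -- π is positive on the support of w for a ∈ Ap
  have hπpos : ∀ a x y, a ∈ Ap → 0 < w x y → 0 < π a x y := by
    intro a x y ha hwxy
    have hca := (hAmem a).mp ha
    exact div_pos (mul_pos (hupos a x hca (hRpos x y hwxy)) (hvpos a y hca (hCpos x y hwxy)))
      (hPpos x y hwxy)
  -- π sums to one over Ap on the support of w
  have hπsum : ∀ x y, 0 < w x y → ∑ a ∈ Ap, π a x y = 1 := by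
    intro x y hwxy
    have huniv : ∑ a, π a x y = 1 := by
      simp only [hπdef]
      rw [← Finset.sum_div]
      exact div_self (hPpos x y hwxy).ne'
    rw [← huniv]
    exact Finset.sum_subset (subset_univ _) fun a _ ha =>
      hzero a x y (le_antisymm (not_lt.mp fun h => ha ((hAmem a).mpr h)) (hc a)) hwxy
  -- the relative entropy D is nonnegative on the support
  have hDnn : ∀ x y, 0 < w x y →
      0 ≤ ∑ a ∈ Ap, (π a x y * Real.log (π a x y) - π a x y * Real.log (c a)) := by
    intro x y hwxy
    have hterm : ∀ a ∈ Ap, π a x y - c a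
        ≤ π a x y * Real.log (π a x y) - π a x y * Real.log (c a) :=
      fun a ha => atom_le (hπnn a x y) (hc a) (fun _ => (hAmem a).mp ha)
    have hsum := Finset.sum_le_sum hterm
    rw [Finset.sum_sub_distrib, hπsum x y hwxy, hcAp] at hsum
    linarith
  -- key pointwise upper bound (Gibbs / Jensen)
  have key1 : ∀ x y, 0 < w x y →
      (∑ a ∈ Ap, c a * (Real.log (u a x) + Real.log (v a y) - Real.log (c a)))
        - Real.log (P x y) ≤ 0 := by
    intro x y hwxy
    have hterm : ∀ a ∈ Ap,
        c a * (Real.log (u a x) + Real.log (v a y) - Real.log (c a)) - c a * Real.log (P x y)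
          ≤ u a x * v a y / P x y - c a := by
      intro a ha
      have hca := (hAmem a).mp ha
      have hux := hupos a x hca (hRpos x y hwxy)
      have hvy := hvpos a y hca (hCpos x y hwxy)
      have hP := hPpos x y hwxy
      have ht : (0:ℝ) < u a x * v a y / (c a * P x y) :=
        div_pos (mul_pos hux hvy) (mul_pos hca hP)
      have hlog := Real.log_le_sub_one_of_pos ht
      have hlogt : Real.log (u a x * v a y / (c a * P x y))
          = Real.log (u a x) + Real.log (v a y) - Real.log (c a) - Real.log (P x y) := by
        rw [Real.log_div (mul_pos hux hvy).ne' (mul_pos hca hP).ne',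
          Real.log_mul hux.ne' hvy.ne', Real.log_mul hca.ne' hP.ne']
        ring
      rw [hlogt] at hlog
      have hmul := mul_le_mul_of_nonneg_left hlog (hc a)
      have hct : c a * (u a x * v a y / (c a * P x y) - 1) = u a x * v a y / P x y - c a := by
        field_simp
      nlinarith [hmul, hct]
    have hsum := Finset.sum_le_sum hterm
    rw [Finset.sum_sub_distrib, Finset.sum_sub_distrib, ← Finset.sum_mul, hcAp, one_mul] at hsum
    have hfrac : (∑ a ∈ Ap, u a x * v a y / P x y) ≤ 1 := by
      rw [← Finset.sum_div]
      exact div_le_one_of_le₀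
        (Finset.sum_le_sum_of_subset_of_nonneg (subset_univ _)
          fun a _ _ => mul_nonneg (hu a x) (hv a y))
        (hPnn x y)
    linarith
  -- pointwise decomposition of w * D
  have key2 : ∀ x y,
      w x y * (∑ a ∈ Ap, (π a x y * Real.log (π a x y) - π a x y * Real.log (c a)))
        = (∑ a ∈ Ap, Real.log (u a x) * (w x y * π a x y))
          + (∑ a ∈ Ap, (Real.log (v a y) - Real.log (c a)) * (w x y * π a x y))
          - w x y * Real.log (P x y) := by
    intro x y
    rcases eq_or_lt_of_le (hw x y) with hw0 | hwpos
    · simp [← hw0]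
    · have hπs := hπsum x y hwpos
      have hlogπ : ∀ a ∈ Ap, Real.log (π a x y)
          = Real.log (u a x) + Real.log (v a y) - Real.log (P x y) := by
        intro a ha
        have hca := (hAmem a).mp ha
        have hux := hupos a x hca (hRpos x y hwpos)
        have hvy := hvpos a y hca (hCpos x y hwpos)
        simp only [hπdef]
        rw [Real.log_div (mul_pos hux hvy).ne' (hPpos x y hwpos).ne',
          Real.log_mul hux.ne' hvy.ne']
      rw [Finset.mul_sum]
      have hptw : ∀ a ∈ Ap,
          w x y * (π a x y * Real.log (π a x y) - π a x y * Real.log (c a))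
            = Real.log (u a x) * (w x y * π a x y)
              + (Real.log (v a y) - Real.log (c a)) * (w x y * π a x y)
              - Real.log (P x y) * (w x y * π a x y) := by
        intro a ha
        rw [hlogπ a ha]
        ring
      rw [Finset.sum_congr rfl hptw, Finset.sum_sub_distrib, Finset.sum_add_distrib,
        ← Finset.mul_sum]
      have hwf : ∑ a ∈ Ap, w x y * π a x y = w x y := by
        rw [← Finset.mul_sum, hπs, mul_one]
      rw [hwf]
      ring
  -- global rearrangement using the row and column conditions
  have T1eq : ∑ x, ∑ y, ∑ a ∈ Ap, Real.log (u a x) * (w x y * π a x y)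
      = ∑ x, ∑ y, ∑ a ∈ Ap, Real.log (u a x) * (c a * w x y) := by
    refine sum_congr rfl fun x _ => ?_
    rw [Finset.sum_comm]
    conv_rhs => rw [Finset.sum_comm]
    refine sum_congr rfl fun a _ => ?_
    rw [← Finset.mul_sum, ← Finset.mul_sum, hrow' a x, ← Finset.mul_sum]
  have T2eq : ∑ x, ∑ y, ∑ a ∈ Ap, (Real.log (v a y) - Real.log (c a)) * (w x y * π a x y)
      = ∑ x, ∑ y, ∑ a ∈ Ap, (Real.log (v a y) - Real.log (c a)) * (c a * w x y) := by
    rw [Finset.sum_comm]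
    conv_rhs => rw [Finset.sum_comm]
    refine sum_congr rfl fun y _ => ?_
    rw [Finset.sum_comm]
    conv_rhs => rw [Finset.sum_comm]
    refine sum_congr rfl fun a _ => ?_
    rw [← Finset.mul_sum, ← Finset.mul_sum, hcol' a y, ← Finset.mul_sum]
  -- grouping into w * bracket
  have hgroup : ∀ x y,
      (∑ a ∈ Ap, Real.log (u a x) * (c a * w x y))
        + (∑ a ∈ Ap, (Real.log (v a y) - Real.log (c a)) * (c a * w x y))
        - w x y * Real.log (P x y)
      = w x y * ((∑ a ∈ Ap, c a * (Real.log (u a x) + Real.log (v a y) - Real.log (c a)))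
          - Real.log (P x y)) := by
    intro x y
    rw [mul_sub, Finset.mul_sum, ← Finset.sum_add_distrib]
    congr 1
    exact sum_congr rfl fun a _ => by ring
  -- the total sum is nonpositive
  have hDsum_le : ∑ x, ∑ y, w x y *
      (∑ a ∈ Ap, (π a x y * Real.log (π a x y) - π a x y * Real.log (c a))) ≤ 0 := by
    have step : ∑ x, ∑ y, w x y *
        (∑ a ∈ Ap, (π a x y * Real.log (π a x y) - π a x y * Real.log (c a)))
        = ∑ x, ∑ y, w x y *
          ((∑ a ∈ Ap, c a * (Real.log (u a x) + Real.log (v a y) - Real.log (c a)))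
            - Real.log (P x y)) := by
      calc ∑ x, ∑ y, w x y *
          (∑ a ∈ Ap, (π a x y * Real.log (π a x y) - π a x y * Real.log (c a)))
          = ∑ x, ∑ y, ((∑ a ∈ Ap, Real.log (u a x) * (w x y * π a x y))
            + (∑ a ∈ Ap, (Real.log (v a y) - Real.log (c a)) * (w x y * π a x y))
            - w x y * Real.log (P x y)) :=
          sum_congr rfl fun x _ => sum_congr rfl fun y _ => key2 x y
        _ = (∑ x, ∑ y, ∑ a ∈ Ap, Real.log (u a x) * (w x y * π a x y))
            + (∑ x, ∑ y, ∑ a ∈ Ap, (Real.log (v a y) - Real.log (c a)) * (w x y * π a x y))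
            - ∑ x, ∑ y, w x y * Real.log (P x y) := by
          simp only [Finset.sum_add_distrib, Finset.sum_sub_distrib]
        _ = (∑ x, ∑ y, ∑ a ∈ Ap, Real.log (u a x) * (c a * w x y))
            + (∑ x, ∑ y, ∑ a ∈ Ap, (Real.log (v a y) - Real.log (c a)) * (c a * w x y))
            - ∑ x, ∑ y, w x y * Real.log (P x y) := by rw [T1eq, T2eq]
        _ = ∑ x, ∑ y, ((∑ a ∈ Ap, Real.log (u a x) * (c a * w x y))
            + (∑ a ∈ Ap, (Real.log (v a y) - Real.log (c a)) * (c a * w x y))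
            - w x y * Real.log (P x y)) := by
          simp only [Finset.sum_add_distrib, Finset.sum_sub_distrib]
        _ = ∑ x, ∑ y, w x y *
            ((∑ a ∈ Ap, c a * (Real.log (u a x) + Real.log (v a y) - Real.log (c a)))
              - Real.log (P x y)) :=
          sum_congr rfl fun x _ => sum_congr rfl fun y _ => hgroup x y
    rw [step]
    refine Finset.sum_nonpos fun x _ => Finset.sum_nonpos fun y _ => ?_
    rcases eq_or_lt_of_le (hw x y) with hw0 | hwpos
    · rw [← hw0, zero_mul]
    · have hb := key1 x y hwpos
      have := mul_le_mul_of_nonneg_left hb (hw x y)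
      simpa using this
  -- each term of the nonpositive sum of nonnegatives vanishes
  have htermnn : ∀ x y, 0 ≤ w x y *
      (∑ a ∈ Ap, (π a x y * Real.log (π a x y) - π a x y * Real.log (c a))) := by
    intro x y
    rcases eq_or_lt_of_le (hw x y) with hw0 | hwpos
    · rw [← hw0, zero_mul]
    · exact mul_nonneg (hw x y) (hDnn x y hwpos)
  have hzero2 : ∀ x y, w x y *
      (∑ a ∈ Ap, (π a x y * Real.log (π a x y) - π a x y * Real.log (c a))) = 0 := by
    have htot : ∑ x, ∑ y, w x y *
        (∑ a ∈ Ap, (π a x y * Real.log (π a x y) - π a x y * Real.log (c a))) = 0 :=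
      le_antisymm hDsum_le (sum_nonneg fun x _ => sum_nonneg fun y _ => htermnn x y)
    intro x y
    have h1 := (Finset.sum_eq_zero_iff_of_nonneg
      (fun x _ => sum_nonneg fun y _ => htermnn x y)).mp htot x (mem_univ x)
    exact (Finset.sum_eq_zero_iff_of_nonneg (fun y _ => htermnn x y)).mp h1 y (mem_univ y)
  -- conclusion
  intro a x y hwxy
  rcases eq_or_lt_of_le (hc a) with hc0 | hcpos
  · have h0 : c a = 0 := hc0.symm
    have hz := hzero a x y h0 hwxy
    simp only [hπdef, hPdef] at hz
    rw [hz]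
    exact h0.symm
  · have haAp : a ∈ Ap := (hAmem a).mpr hcpos
    have hD0 : ∑ a' ∈ Ap, (π a' x y * Real.log (π a' x y) - π a' x y * Real.log (c a')) = 0 := by
      have := hzero2 x y
      rcases mul_eq_zero.mp this with h | h
      · exact absurd h hwxy.ne'
      · exact h
    have hτnn : ∀ a' ∈ Ap, 0 ≤ (π a' x y * Real.log (π a' x y) - π a' x y * Real.log (c a'))
        - (π a' x y - c a') := by
      intro a' ha'
      have := atom_le (hπnn a' x y) (hc a') (fun _ => (hAmem a').mp ha')
      linarith
    have hτsum : ∑ a' ∈ Ap, ((π a' x y * Real.log (π a' x y) - π a' x y * Real.log (c a'))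
        - (π a' x y - c a')) = 0 := by
      rw [Finset.sum_sub_distrib, hD0, Finset.sum_sub_distrib, hπsum x y hwxy, hcAp]
      ring
    have hτ0 := (Finset.sum_eq_zero_iff_of_nonneg hτnn).mp hτsum a haAp
    have heq : π a x y * Real.log (π a x y) - π a x y * Real.log (c a) = π a x y - c a := by
      linarith
    have hfin := atom_eq (hπnn a x y) (hc a) (fun _ => hcpos) heq
    simpa only [hπdef, hPdef] using hfin

end Core

section PureMain

variable {SA SX SY SG : Type*} [Fintype SA] [Fintype SX] [Fintype SY] [Fintype SG]

lemma pure_main (q : SA → SX → SY → SG → ℝ)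
    (pA : SA → ℝ) (pG : SG → ℝ) (pAX : SA → SX → ℝ) (pAY : SA → SY → ℝ)
    (pAG : SA → SG → ℝ) (pXG : SX → SG → ℝ) (pYG : SY → SG → ℝ)
    (pXY : SX → SY → ℝ) (pAXY : SA → SX → SY → ℝ) (pXYG : SX → SY → SG → ℝ)
    (pAXG : SA → SX → SG → ℝ) (pAYG : SA → SY → SG → ℝ)
    (hqnn : ∀ a x y g, 0 ≤ q a x y g)
    (dAXY : ∀ a x y, pAXY a x y = ∑ g, q a x y g)
    (dXYG : ∀ x y g, pXYG x y g = ∑ a, q a x y g)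
    (dAXG : ∀ a x g, pAXG a x g = ∑ y, q a x y g)
    (dAYG : ∀ a y g, pAYG a y g = ∑ x, q a x y g)
    (dAX : ∀ a x, pAX a x = ∑ y, pAXY a x y)
    (dAY : ∀ a y, pAY a y = ∑ x, pAXY a x y)
    (dXY : ∀ x y, pXY x y = ∑ a, pAXY a x y)
    (dA : ∀ a, pA a = ∑ x, pAX a x)
    (dAG : ∀ a g, pAG a g = ∑ x, ∑ y, q a x y g)
    (dXG : ∀ x g, pXG x g = ∑ y, pXYG x y g)
    (dYG : ∀ y g, pYG y g = ∑ x, pXYG x y g)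
    (dG : ∀ g, pG g = ∑ a, pAG a g)
    (W2 : ∀ a x y, pAXY a x y * pA a = pAX a x * pAY a y)
    (W1 : ∀ a x y g, q a x y g * pXY x y = pAXY a x y * pXYG x y g)
    (W3 : ∀ a x g, pAXG a x g * pG g = pAG a g * pXG x g)
    (W4 : ∀ a y g, pAYG a y g * pG g = pAG a g * pYG y g) :
    ∀ a x y g, q a x y g * pG g = pAG a g * pXYG x y g := by
  -- nonnegativity of the marginals
  have hAXYnn : ∀ a x y, 0 ≤ pAXY a x y := fun a x y =>
    (dAXY a x y) ▸ sum_nonneg fun g _ => hqnn a x y g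
  have hXYGnn : ∀ x y g, 0 ≤ pXYG x y g := fun x y g =>
    (dXYG x y g) ▸ sum_nonneg fun a _ => hqnn a x y g
  have hAXnn : ∀ a x, 0 ≤ pAX a x := fun a x =>
    (dAX a x) ▸ sum_nonneg fun y _ => hAXYnn a x y
  have hAYnn : ∀ a y, 0 ≤ pAY a y := fun a y =>
    (dAY a y) ▸ sum_nonneg fun x _ => hAXYnn a x y
  have hAnn : ∀ a, 0 ≤ pA a := fun a => (dA a) ▸ sum_nonneg fun x _ => hAXnn a x
  have hAGnn : ∀ a g, 0 ≤ pAG a g := fun a g =>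
    (dAG a g) ▸ sum_nonneg fun x _ => sum_nonneg fun y _ => hqnn a x y g
  have hGnn : ∀ g, 0 ≤ pG g := fun g => (dG g) ▸ sum_nonneg fun a _ => hAGnn a g
  -- monotonicity facts
  have hAXleA : ∀ a x, pAX a x ≤ pA a := fun a x =>
    (dA a) ▸ single_le_sum (fun x' _ => hAXnn a x') (mem_univ x)
  have hAXYleAX : ∀ a x y, pAXY a x y ≤ pAX a x := fun a x y =>
    (dAX a x) ▸ single_le_sum (fun y' _ => hAXYnn a x y') (mem_univ y)
  have hqleXYG : ∀ a x y g, q a x y g ≤ pXYG x y g := fun a x y g =>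
    (dXYG x y g) ▸ single_le_sum (fun a' _ => hqnn a' x y g) (mem_univ a)
  have hXYGleXY : ∀ x y g, pXYG x y g ≤ pXY x y := by
    intro x y g
    rw [dXYG, dXY]
    exact sum_le_sum fun a _ =>
      (dAXY a x y) ▸ single_le_sum (fun g' _ => hqnn a x y g') (mem_univ g)
  have hAGleG : ∀ a g, pAG a g ≤ pG g := fun a g =>
    (dG g) ▸ single_le_sum (fun a' _ => hAGnn a' g) (mem_univ a)
  -- the product structure
  have hUV : ∀ a x y, pAX a x / pA a * pAY a y = pAXY a x y := by
    intro a x y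
    rcases eq_or_lt_of_le (hAnn a) with hA0 | hApos
    · have hAX0 : pAX a x = 0 := le_antisymm (le_trans (hAXleA a x) (le_of_eq hA0.symm)) (hAXnn a x)
      have hAXY0 : pAXY a x y = 0 :=
        le_antisymm (hAX0 ▸ hAXYleAX a x y) (hAXYnn a x y)
      rw [hAX0, hAXY0, zero_div, zero_mul]
    · rw [div_mul_eq_mul_div, div_eq_iff hApos.ne']
      linarith [W2 a x y]
  have hP : ∀ x y, (∑ a', pAX a' x / pA a' * pAY a' y) = pXY x y := by
    intro x y
    rw [dXY]
    exact sum_congr rfl fun a _ => hUV a x y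
  intro a x y g
  by_cases hg : pG g = 0
  · have hAG0 : pAG a g = 0 := le_antisymm (hg ▸ hAGleG a g) (hAGnn a g)
    rw [hg, hAG0, mul_zero, zero_mul]
  · have hGpos : 0 < pG g := lt_of_le_of_ne (hGnn g) (Ne.symm hg)
    -- per-point rewriting of w * π into q
    have hq1 : ∀ a' x' y', pXYG x' y' g * (pAXY a' x' y' / pXY x' y') = q a' x' y' g := by
      intro a' x' y'
      by_cases hxy : pXY x' y' = 0
      · have hw0 : pXYG x' y' g = 0 :=
          le_antisymm (hxy ▸ hXYGleXY x' y' g) (hXYGnn x' y' g)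
        have hq0 : q a' x' y' g = 0 :=
          le_antisymm (le_trans (hqleXYG a' x' y' g) (le_of_eq hw0)) (hqnn a' x' y' g)
        rw [hw0, hq0, zero_mul]
      · rw [mul_div_assoc', div_eq_iff hxy]
        linarith [W1 a' x' y' g]
    have hcore := core_lemma (fun a' x' => pAX a' x' / pA a') (fun a' y' => pAY a' y')
      (fun x' y' => pXYG x' y' g) (fun a' => pAG a' g / pG g)
      (fun a' x' => div_nonneg (hAXnn a' x') (hAnn a'))
      (fun a' y' => hAYnn a' y')
      (fun x' y' => hXYGnn x' y' g)
      (fun a' => div_nonneg (hAGnn a' g) (hGnn g))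
      (by rw [← Finset.sum_div, ← dG]; exact div_self hg)
      (by
        intro a' x'
        show ∑ y', pXYG x' y' g * (pAX a' x' / pA a' * pAY a' y'
            / (∑ a'', pAX a'' x' / pA a'' * pAY a'' y')) = _
        calc ∑ y', pXYG x' y' g * (pAX a' x' / pA a' * pAY a' y'
              / (∑ a'', pAX a'' x' / pA a'' * pAY a'' y'))
            = ∑ y', pXYG x' y' g * (pAXY a' x' y' / pXY x' y') :=
              sum_congr rfl fun y' _ => by rw [hP x' y', hUV a' x' y']
          _ = ∑ y', q a' x' y' g := sum_congr rfl fun y' _ => hq1 a' x' y'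
          _ = pAXG a' x' g := (dAXG a' x' g).symm
          _ = pAG a' g / pG g * ∑ y', pXYG x' y' g := by
              rw [← dXG, div_mul_eq_mul_div, eq_div_iff hg]
              linarith [W3 a' x' g]
        )
      (by
        intro a' y'
        show ∑ x', pXYG x' y' g * (pAX a' x' / pA a' * pAY a' y'
            / (∑ a'', pAX a'' x' / pA a'' * pAY a'' y')) = _
        calc ∑ x', pXYG x' y' g * (pAX a' x' / pA a' * pAY a' y'
              / (∑ a'', pAX a'' x' / pA a'' * pAY a'' y'))
            = ∑ x', pXYG x' y' g * (pAXY a' x' y' / pXY x' y') :=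
              sum_congr rfl fun x' _ => by rw [hP x' y', hUV a' x' y']
          _ = ∑ x', q a' x' y' g := sum_congr rfl fun x' _ => hq1 a' x' y'
          _ = pAYG a' y' g := (dAYG a' y' g).symm
          _ = pAG a' g / pG g * ∑ x', pXYG x' y' g := by
              rw [← dYG, div_mul_eq_mul_div, eq_div_iff hg]
              linarith [W4 a' y' g]
        )
    by_cases hw : 0 < pXYG x y g
    · have hc2 := hcore a x y hw
      rw [hP x y, hUV a x y] at hc2
      -- hc2 : pAXY a x y / pXY x y = pAG a g / pG g
      have hXYpos : 0 < pXY x y := lt_of_lt_of_le hw (hXYGleXY x y g)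
      have hcross : pAXY a x y * pG g = pAG a g * pXY x y := by
        have := (div_eq_div_iff hXYpos.ne' hGpos.ne').mp hc2
        linarith
      have hW1 := W1 a x y g
      have := mul_right_cancel₀ hXYpos.ne'
        (show q a x y g * pG g * pXY x y = pAG a g * pXYG x y g * pXY x y by
          nlinarith [hW1, hcross])
      exact this
    · have hw0 : pXYG x y g = 0 := le_antisymm (not_lt.mp hw) (hXYGnn x y g)
      have hq0 : q a x y g = 0 :=
        le_antisymm (hw0 ▸ hqleXYG a x y g) (hqnn a x y g)
      rw [hw0, hq0, mul_zero, zero_mul]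

end PureMain

section Meas

variable {Ω : Type*} [MeasurableSpace Ω] (μ : Measure Ω) [IsProbabilityMeasure μ]

lemma meas_congr_toReal (μ : Measure Ω) {s t : Set Ω} (h : s = t) :
    (μ s).toReal = (μ t).toReal := by rw [h]

lemma meas_fiber_sum {S T : Type*} [Fintype S] [Fintype T]
    [MeasurableSpace S] [MeasurableSingletonClass S]
    [MeasurableSpace T] [MeasurableSingletonClass T]
    {W : Ω → S} {V : Ω → T} (hW : Measurable W) (hV : Measurable V) (s : S) :
    (μ (W ⁻¹' {s})).toReal
      = ∑ t, (μ ((fun ω => (W ω, V ω)) ⁻¹' {(s, t)})).toReal := by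
  have hset : W ⁻¹' {s} = ⋃ t ∈ Finset.univ (α := T), (fun ω => (W ω, V ω)) ⁻¹' {(s, t)} := by
    ext ω
    simp only [Set.mem_preimage, Set.mem_singleton_iff, Set.mem_iUnion, Prod.ext_iff,
      Finset.mem_univ, exists_true_left]
    exact ⟨fun h => ⟨V ω, h, rfl⟩, fun ⟨t, h, _⟩ => h⟩
  rw [hset, measure_biUnion_finset ?_ ?_]
  · exact ENNReal.toReal_sum fun t _ => measure_ne_top μ _
  · intro t _ t' _ hne
    refine Set.disjoint_left.mpr fun ω h1 h2 => hne ?_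
    simp only [Set.mem_preimage, Set.mem_singleton_iff, Prod.ext_iff] at h1 h2
    rw [← h1.2, ← h2.2]
  · intro t _
    exact (hW.prodMk hV) (MeasurableSet.singleton _)

lemma cmi_eq_zero_iff {S T U : Type*} [Fintype S] [Fintype T] [Fintype U]
    [MeasurableSpace S] [MeasurableSingletonClass S]
    [MeasurableSpace T] [MeasurableSingletonClass T]
    [MeasurableSpace U] [MeasurableSingletonClass U]
    {X : Ω → S} {Y : Ω → T} {Z : Ω → U}
    (hX : Measurable X) (hY : Measurable Y) (hZ : Measurable Z) :
    cmi μ X Y Z = 0 ↔ ∀ s t u,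
      (μ ((fun ω => (X ω, Y ω, Z ω)) ⁻¹' {(s, t, u)})).toReal * (μ (Z ⁻¹' {u})).toReal
        = (μ ((fun ω => (X ω, Z ω)) ⁻¹' {(s, u)})).toReal
            * (μ ((fun ω => (Y ω, Z ω)) ⁻¹' {(t, u)})).toReal := by
  classical
  set p : S → T → U → ℝ :=
    fun s t u => (μ ((fun ω => (X ω, Y ω, Z ω)) ⁻¹' {(s, t, u)})).toReal with hpdef
  have hp : ∀ s t u, 0 ≤ p s t u := fun _ _ _ => ENNReal.toReal_nonneg
  have h13 : ∀ s u, (μ ((fun ω => (X ω, Z ω)) ⁻¹' {(s, u)})).toReal = ∑ t, p s t u := by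
    intro s u
    rw [meas_fiber_sum μ (hX.prodMk hZ) hY (s, u)]
    refine sum_congr rfl fun t _ => meas_congr_toReal μ ?_
    ext ω
    simp only [Set.mem_preimage, Set.mem_singleton_iff, Prod.ext_iff]
    tauto
  have h23 : ∀ t u, (μ ((fun ω => (Y ω, Z ω)) ⁻¹' {(t, u)})).toReal = ∑ s, p s t u := by
    intro t u
    rw [meas_fiber_sum μ (hY.prodMk hZ) hX (t, u)]
    refine sum_congr rfl fun s _ => meas_congr_toReal μ ?_
    ext ω
    simp only [Set.mem_preimage, Set.mem_singleton_iff, Prod.ext_iff]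
    tauto
  have h3 : ∀ u, (μ (Z ⁻¹' {u})).toReal = ∑ s, ∑ t, p s t u := by
    intro u
    rw [meas_fiber_sum μ hZ (hX.prodMk hY) u, Fintype.sum_prod_type]
    refine sum_congr rfl fun s _ => sum_congr rfl fun t _ => meas_congr_toReal μ ?_
    ext ω
    simp only [Set.mem_preimage, Set.mem_singleton_iff, Prod.ext_iff]
    tauto
  have ecmi : cmi μ X Y Z
      = (∑ s, ∑ u, Real.negMulLog (∑ t, p s t u))
        + (∑ t, ∑ u, Real.negMulLog (∑ s, p s t u))
        - (∑ s, ∑ t, ∑ u, Real.negMulLog (p s t u))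
        - (∑ u, Real.negMulLog (∑ s, ∑ t, p s t u)) := by
    have eXZ : Hshannon μ (fun ω => (X ω, Z ω))
        = ∑ s, ∑ u, Real.negMulLog (∑ t, p s t u) := by
      rw [Hshannon, Fintype.sum_prod_type]
      exact sum_congr rfl fun s _ => sum_congr rfl fun u _ => by rw [h13]
    have eYZ : Hshannon μ (fun ω => (Y ω, Z ω))
        = ∑ t, ∑ u, Real.negMulLog (∑ s, p s t u) := by
      rw [Hshannon, Fintype.sum_prod_type]
      exact sum_congr rfl fun t _ => sum_congr rfl fun u _ => by rw [h23]
    have eXYZ : Hshannon μ (fun ω => (X ω, Y ω, Z ω))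
        = ∑ s, ∑ t, ∑ u, Real.negMulLog (p s t u) := by
      rw [Hshannon]
      simp only [Fintype.sum_prod_type]
      rfl
    have eZ : Hshannon μ Z = ∑ u, Real.negMulLog (∑ s, ∑ t, p s t u) := by
      rw [Hshannon]
      exact sum_congr rfl fun u _ => by rw [h3]
    rw [cmi, eXZ, eYZ, eXYZ, eZ]
  rw [ecmi, F_eq_zero_iff p hp]
  refine forall_congr' fun s => forall_congr' fun t => forall_congr' fun u => ?_
  rw [h13 s u, h23 t u, h3 u]

end Meas


/-- **Dual conditional Ingleton criterion for Composition, case i.** -/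
theorem dual_cond_ingleton_composition_i
    {Ω : Type*} [MeasurableSpace Ω] (μ : Measure Ω) [IsProbabilityMeasure μ]
    {SA SX SY SG : Type*}
    [Fintype SA] [Nonempty SA] [MeasurableSpace SA] [MeasurableSingletonClass SA]
    [Fintype SX] [Nonempty SX] [MeasurableSpace SX] [MeasurableSingletonClass SX]
    [Fintype SY] [Nonempty SY] [MeasurableSpace SY] [MeasurableSingletonClass SY]
    [Fintype SG] [Nonempty SG] [MeasurableSpace SG] [MeasurableSingletonClass SG]
    (A : Ω → SA) (X : Ω → SX) (Y : Ω → SY) (G : Ω → SG)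
    (hA : Measurable A) (hX : Measurable X) (hY : Measurable Y) (hG : Measurable G)
    (hG1 : cmi μ A G (fun ω => (X ω, Y ω)) = 0) (hG2 : cmi μ X Y A = 0)
    (h1 : cmi μ A X G = 0) (h2 : cmi μ A Y G = 0) :
    cmi μ A (fun ω => (X ω, Y ω)) G = 0 := by
  classical
  have hXY : Measurable (fun ω => (X ω, Y ω)) := hX.prodMk hY
  -- factorizations from the four hypotheses
  have fact2 : ∀ (x : SX) (y : SY) (a : SA),
      (μ ((fun ω => (X ω, Y ω, A ω)) ⁻¹' {(x, y, a)})).toReal * (μ (A ⁻¹' {a})).toReal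
        = (μ ((fun ω => (X ω, A ω)) ⁻¹' {(x, a)})).toReal
          * (μ ((fun ω => (Y ω, A ω)) ⁻¹' {(y, a)})).toReal :=
    (cmi_eq_zero_iff μ hX hY hA).mp hG2
  have fact1 : ∀ (a : SA) (g : SG) (xy : SX × SY),
      (μ ((fun ω => (A ω, G ω, (X ω, Y ω))) ⁻¹' {(a, g, xy)})).toReal
          * (μ ((fun ω => (X ω, Y ω)) ⁻¹' {xy})).toReal
        = (μ ((fun ω => (A ω, (X ω, Y ω))) ⁻¹' {(a, xy)})).toReal
          * (μ ((fun ω => (G ω, (X ω, Y ω))) ⁻¹' {(g, xy)})).toReal :=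
    (cmi_eq_zero_iff μ hA hG hXY).mp hG1
  have fact3 : ∀ (a : SA) (x : SX) (g : SG),
      (μ ((fun ω => (A ω, X ω, G ω)) ⁻¹' {(a, x, g)})).toReal * (μ (G ⁻¹' {g})).toReal
        = (μ ((fun ω => (A ω, G ω)) ⁻¹' {(a, g)})).toReal
          * (μ ((fun ω => (X ω, G ω)) ⁻¹' {(x, g)})).toReal :=
    (cmi_eq_zero_iff μ hA hX hG).mp h1
  have fact4 : ∀ (a : SA) (y : SY) (g : SG),
      (μ ((fun ω => (A ω, Y ω, G ω)) ⁻¹' {(a, y, g)})).toReal * (μ (G ⁻¹' {g})).toReal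
        = (μ ((fun ω => (A ω, G ω)) ⁻¹' {(a, g)})).toReal
          * (μ ((fun ω => (Y ω, G ω)) ⁻¹' {(y, g)})).toReal :=
    (cmi_eq_zero_iff μ hA hY hG).mp h2
  -- reshaping lemmas between different tuple nestings
  have cAXY : ∀ (a : SA) (x : SX) (y : SY),
      (μ ((fun ω => (A ω, (X ω, Y ω))) ⁻¹' {(a, (x, y))})).toReal
        = (μ ((fun ω => (X ω, Y ω, A ω)) ⁻¹' {(x, y, a)})).toReal := fun a x y =>
    meas_congr_toReal μ (by
      ext ω
      simp only [Set.mem_preimage, Set.mem_singleton_iff, Prod.ext_iff]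
      tauto)
  have cq : ∀ (a : SA) (x : SX) (y : SY) (g : SG),
      (μ ((fun ω => (A ω, (X ω, Y ω), G ω)) ⁻¹' {(a, (x, y), g)})).toReal
        = (μ ((fun ω => (A ω, G ω, (X ω, Y ω))) ⁻¹' {(a, g, (x, y))})).toReal :=
    fun a x y g =>
    meas_congr_toReal μ (by
      ext ω
      simp only [Set.mem_preimage, Set.mem_singleton_iff, Prod.ext_iff]
      tauto)
  have cXYG : ∀ (x : SX) (y : SY) (g : SG),
      (μ ((fun ω => ((X ω, Y ω), G ω)) ⁻¹' {((x, y), g)})).toReal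
        = (μ ((fun ω => (G ω, (X ω, Y ω))) ⁻¹' {(g, (x, y))})).toReal := fun x y g =>
    meas_congr_toReal μ (by
      ext ω
      simp only [Set.mem_preimage, Set.mem_singleton_iff, Prod.ext_iff]
      tauto)
  -- marginalization identities
  have dAXY : ∀ (a : SA) (x : SX) (y : SY),
      (μ ((fun ω => (X ω, Y ω, A ω)) ⁻¹' {(x, y, a)})).toReal
        = ∑ g, (μ ((fun ω => (A ω, G ω, (X ω, Y ω))) ⁻¹' {(a, g, (x, y))})).toReal := by
    intro a x y
    rw [meas_fiber_sum μ (hX.prodMk (hY.prodMk hA)) hG (x, y, a)]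
    refine sum_congr rfl fun g _ => meas_congr_toReal μ ?_
    ext ω
    simp only [Set.mem_preimage, Set.mem_singleton_iff, Prod.ext_iff]
    tauto
  have dXYG : ∀ (x : SX) (y : SY) (g : SG),
      (μ ((fun ω => (G ω, (X ω, Y ω))) ⁻¹' {(g, (x, y))})).toReal
        = ∑ a, (μ ((fun ω => (A ω, G ω, (X ω, Y ω))) ⁻¹' {(a, g, (x, y))})).toReal := by
    intro x y g
    rw [meas_fiber_sum μ (hG.prodMk hXY) hA (g, (x, y))]
    refine sum_congr rfl fun a _ => meas_congr_toReal μ ?_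
    ext ω
    simp only [Set.mem_preimage, Set.mem_singleton_iff, Prod.ext_iff]
    tauto
  have dAXG : ∀ (a : SA) (x : SX) (g : SG),
      (μ ((fun ω => (A ω, X ω, G ω)) ⁻¹' {(a, x, g)})).toReal
        = ∑ y, (μ ((fun ω => (A ω, G ω, (X ω, Y ω))) ⁻¹' {(a, g, (x, y))})).toReal := by
    intro a x g
    rw [meas_fiber_sum μ (hA.prodMk (hX.prodMk hG)) hY (a, x, g)]
    refine sum_congr rfl fun y _ => meas_congr_toReal μ ?_
    ext ω
    simp only [Set.mem_preimage, Set.mem_singleton_iff, Prod.ext_iff]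
    tauto
  have dAYG : ∀ (a : SA) (y : SY) (g : SG),
      (μ ((fun ω => (A ω, Y ω, G ω)) ⁻¹' {(a, y, g)})).toReal
        = ∑ x, (μ ((fun ω => (A ω, G ω, (X ω, Y ω))) ⁻¹' {(a, g, (x, y))})).toReal := by
    intro a y g
    rw [meas_fiber_sum μ (hA.prodMk (hY.prodMk hG)) hX (a, y, g)]
    refine sum_congr rfl fun x _ => meas_congr_toReal μ ?_
    ext ω
    simp only [Set.mem_preimage, Set.mem_singleton_iff, Prod.ext_iff]
    tauto
  have dAX : ∀ (a : SA) (x : SX),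
      (μ ((fun ω => (X ω, A ω)) ⁻¹' {(x, a)})).toReal
        = ∑ y, (μ ((fun ω => (X ω, Y ω, A ω)) ⁻¹' {(x, y, a)})).toReal := by
    intro a x
    rw [meas_fiber_sum μ (hX.prodMk hA) hY (x, a)]
    refine sum_congr rfl fun y _ => meas_congr_toReal μ ?_
    ext ω
    simp only [Set.mem_preimage, Set.mem_singleton_iff, Prod.ext_iff]
    tauto
  have dAY : ∀ (a : SA) (y : SY),
      (μ ((fun ω => (Y ω, A ω)) ⁻¹' {(y, a)})).toReal
        = ∑ x, (μ ((fun ω => (X ω, Y ω, A ω)) ⁻¹' {(x, y, a)})).toReal := by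
    intro a y
    rw [meas_fiber_sum μ (hY.prodMk hA) hX (y, a)]
    refine sum_congr rfl fun x _ => meas_congr_toReal μ ?_
    ext ω
    simp only [Set.mem_preimage, Set.mem_singleton_iff, Prod.ext_iff]
    tauto
  have dXY : ∀ (x : SX) (y : SY),
      (μ ((fun ω => (X ω, Y ω)) ⁻¹' {(x, y)})).toReal
        = ∑ a, (μ ((fun ω => (X ω, Y ω, A ω)) ⁻¹' {(x, y, a)})).toReal := by
    intro x y
    rw [meas_fiber_sum μ hXY hA (x, y)]
    refine sum_congr rfl fun a _ => meas_congr_toReal μ ?_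
    ext ω
    simp only [Set.mem_preimage, Set.mem_singleton_iff, Prod.ext_iff]
    tauto
  have dA : ∀ (a : SA),
      (μ (A ⁻¹' {a})).toReal
        = ∑ x, (μ ((fun ω => (X ω, A ω)) ⁻¹' {(x, a)})).toReal := by
    intro a
    rw [meas_fiber_sum μ hA hX a]
    refine sum_congr rfl fun x _ => meas_congr_toReal μ ?_
    ext ω
    simp only [Set.mem_preimage, Set.mem_singleton_iff, Prod.ext_iff]
    tauto
  have dAG : ∀ (a : SA) (g : SG),
      (μ ((fun ω => (A ω, G ω)) ⁻¹' {(a, g)})).toReal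
        = ∑ x, ∑ y, (μ ((fun ω => (A ω, G ω, (X ω, Y ω))) ⁻¹' {(a, g, (x, y))})).toReal := by
    intro a g
    rw [meas_fiber_sum μ (hA.prodMk hG) hXY (a, g), Fintype.sum_prod_type]
    refine sum_congr rfl fun x _ => sum_congr rfl fun y _ => meas_congr_toReal μ ?_
    ext ω
    simp only [Set.mem_preimage, Set.mem_singleton_iff, Prod.ext_iff]
    tauto
  have dXG : ∀ (x : SX) (g : SG),
      (μ ((fun ω => (X ω, G ω)) ⁻¹' {(x, g)})).toReal
        = ∑ y, (μ ((fun ω => (G ω, (X ω, Y ω))) ⁻¹' {(g, (x, y))})).toReal := by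
    intro x g
    rw [meas_fiber_sum μ (hX.prodMk hG) hY (x, g)]
    refine sum_congr rfl fun y _ => meas_congr_toReal μ ?_
    ext ω
    simp only [Set.mem_preimage, Set.mem_singleton_iff, Prod.ext_iff]
    tauto
  have dYG : ∀ (y : SY) (g : SG),
      (μ ((fun ω => (Y ω, G ω)) ⁻¹' {(y, g)})).toReal
        = ∑ x, (μ ((fun ω => (G ω, (X ω, Y ω))) ⁻¹' {(g, (x, y))})).toReal := by
    intro y g
    rw [meas_fiber_sum μ (hY.prodMk hG) hX (y, g)]
    refine sum_congr rfl fun x _ => meas_congr_toReal μ ?_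
    ext ω
    simp only [Set.mem_preimage, Set.mem_singleton_iff, Prod.ext_iff]
    tauto
  have dG : ∀ (g : SG),
      (μ (G ⁻¹' {g})).toReal
        = ∑ a, (μ ((fun ω => (A ω, G ω)) ⁻¹' {(a, g)})).toReal := by
    intro g
    rw [meas_fiber_sum μ hG hA g]
    refine sum_congr rfl fun a _ => meas_congr_toReal μ ?_
    ext ω
    simp only [Set.mem_preimage, Set.mem_singleton_iff, Prod.ext_iff]
    tauto
  -- assemble via the pure combinatorial lemma
  have main := pure_main
    (fun a x y g => (μ ((fun ω => (A ω, G ω, (X ω, Y ω))) ⁻¹' {(a, g, (x, y))})).toReal)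
    (fun a => (μ (A ⁻¹' {a})).toReal)
    (fun g => (μ (G ⁻¹' {g})).toReal)
    (fun a x => (μ ((fun ω => (X ω, A ω)) ⁻¹' {(x, a)})).toReal)
    (fun a y => (μ ((fun ω => (Y ω, A ω)) ⁻¹' {(y, a)})).toReal)
    (fun a g => (μ ((fun ω => (A ω, G ω)) ⁻¹' {(a, g)})).toReal)
    (fun x g => (μ ((fun ω => (X ω, G ω)) ⁻¹' {(x, g)})).toReal)
    (fun y g => (μ ((fun ω => (Y ω, G ω)) ⁻¹' {(y, g)})).toReal)
    (fun x y => (μ ((fun ω => (X ω, Y ω)) ⁻¹' {(x, y)})).toReal)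
    (fun a x y => (μ ((fun ω => (X ω, Y ω, A ω)) ⁻¹' {(x, y, a)})).toReal)
    (fun x y g => (μ ((fun ω => (G ω, (X ω, Y ω))) ⁻¹' {(g, (x, y))})).toReal)
    (fun a x g => (μ ((fun ω => (A ω, X ω, G ω)) ⁻¹' {(a, x, g)})).toReal)
    (fun a y g => (μ ((fun ω => (A ω, Y ω, G ω)) ⁻¹' {(a, y, g)})).toReal)
    (fun _ _ _ _ => ENNReal.toReal_nonneg)
    dAXY dXYG dAXG dAYG dAX dAY dXY dA dAG dXG dYG dG
    (fun a x y => fact2 x y a)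
    (fun a x y g => by
      have h := fact1 a g (x, y)
      rwa [cAXY a x y] at h)
    (fun a x g => fact3 a x g)
    (fun a y g => fact4 a y g)
  rw [cmi_eq_zero_iff μ hA hXY hG]
  intro s t u
  obtain ⟨x, y⟩ := t
  show (μ ((fun ω => (A ω, (X ω, Y ω), G ω)) ⁻¹' {(s, (x, y), u)})).toReal
      * (μ (G ⁻¹' {u})).toReal
    = (μ ((fun ω => (A ω, G ω)) ⁻¹' {(s, u)})).toReal
      * (μ ((fun ω => ((X ω, Y ω), G ω)) ⁻¹' {((x, y), u)})).toReal
  rw [cq s x y u, cXYG x y u]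
  exact main s x y u
end
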